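/- arXiv:1612.04607 — 10 statements merged into one kernel-verified Lean document; each statement's English description precedes it below -/
import Mathlib

section
/- Let X^c = ((u_i^c, x_i^c))_i ∈ Ω. Say that X^c belongs to Ω^c if X^c minimizes Σ_i C_i(u_i,x_i) over the restricted feasible set {X ∈ Ω : u_i ≤ u_i^c and x_i ≤ x_i^c for all i}. Then Ω^c = Ω', i.e. a primal-feasible point is a fixed point of the restricted minimization correspondence if and only if it has no generator i with w_i ≠ 0, u_i = 1 and x_i = 0. -/
/-
Since every admissible point of the restricted problem produces at most `x_i^c` at each generator
while the outputs still sum to `d`, it produces exactly `x_i^c` everywhere; so the only freedom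
left is to switch off a committed generator, which is possible only where `x_i^c = 0`. Switching
off such a generator saves exactly `w_i`: hence `X^c` is optimal iff every committed idle generator
has `w_i = 0`.
-/

noncomputable section

/-- Feasible set of a single generator with capacity `xmax`:
binary state `u ∈ {0,1}` and output `0 ≤ x ≤ u · xmax`. -/
def Gen (xmax : ℝ) : Set (ℝ × ℝ) :=
  {ux | (ux.1 = 0 ∨ ux.1 = 1) ∧ 0 ≤ ux.2 ∧ ux.2 ≤ ux.1 * xmax}

/-- Cost of a generator: start-up cost `w·u` plus variable cost `c x`. -/
def Cost (w : ℝ) (c : ℝ → ℝ) (ux : ℝ × ℝ) : ℝ := w * ux.1 + c ux.2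

/-- Primal feasible set: each generator in its feasible set, total output equals demand. -/
def Omega (n : ℕ) (xmax : Fin n → ℝ) (d : ℝ) : Set (Fin n → ℝ × ℝ) :=
  {X | (∀ i, X i ∈ Gen (xmax i)) ∧ ∑ i, (X i).2 = d}

namespace Gen

variable {m : ℝ} {ux vx : ℝ × ℝ}

theorem zero_mem (m : ℝ) : ((0, 0) : ℝ × ℝ) ∈ Gen m :=
  ⟨Or.inl rfl, le_rfl, by simp⟩

theorem snd_eq_zero_of_fst_eq_zero (h : ux ∈ Gen m) (hu : ux.1 = 0) : ux.2 = 0 :=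
  le_antisymm (by simpa [hu] using h.2.2) h.2.1

theorem fst_nonneg (h : ux ∈ Gen m) : 0 ≤ ux.1 := by
  rcases h.1 with h0 | h1 <;> simp [*]

theorem fst_eq_of_snd_eq {m' : ℝ} (hu : ux ∈ Gen m) (hv : vx ∈ Gen m') (hle : ux.1 ≤ vx.1)
    (hx : ux.2 = vx.2) (hidle : ¬(vx.1 = 1 ∧ vx.2 = 0)) : ux.1 = vx.1 := by
  rcases hu.1 with hu0 | hu1 <;> rcases hv.1 with hv0 | hv1
  · rw [hu0, hv0]
  · exact absurd ⟨hv1, hx ▸ snd_eq_zero_of_fst_eq_zero hu hu0⟩ hidle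
  · linarith
  · rw [hu1, hv1]

end Gen

theorem cost_eq_of_snd_eq {w : ℝ} {c : ℝ → ℝ} {m m' : ℝ} {ux vx : ℝ × ℝ}
    (hu : ux ∈ Gen m) (hv : vx ∈ Gen m') (hle : ux.1 ≤ vx.1) (hx : ux.2 = vx.2)
    (hidle : ¬(w ≠ 0 ∧ vx.1 = 1 ∧ vx.2 = 0)) : Cost w c ux = Cost w c vx := by
  by_cases hw : w = 0
  · simp [Cost, hw, hx]
  · simp [Cost, hx, Gen.fst_eq_of_snd_eq hu hv hle hx fun h => hidle ⟨hw, h⟩]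

def RestrictedOmega (n : ℕ) (xmax : Fin n → ℝ) (d : ℝ) (Xc : Fin n → ℝ × ℝ) :
    Set (Fin n → ℝ × ℝ) :=
  {X ∈ Omega n xmax d | ∀ i, (X i).1 ≤ (Xc i).1 ∧ (X i).2 ≤ (Xc i).2}

section Restricted

variable {n : ℕ} {xmax : Fin n → ℝ} {d : ℝ} {Xc X : Fin n → ℝ × ℝ}

theorem self_mem_restrictedOmega (hXc : Xc ∈ Omega n xmax d) : Xc ∈ RestrictedOmega n xmax d Xc :=
  ⟨hXc, fun _ => ⟨le_rfl, le_rfl⟩⟩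

theorem snd_eq_of_mem_restrictedOmega (hXc : Xc ∈ Omega n xmax d)
    (hX : X ∈ RestrictedOmega n xmax d Xc) (i : Fin n) : (X i).2 = (Xc i).2 :=
  ((Finset.sum_eq_sum_iff_of_le fun j _ => (hX.2 j).2).1 (hX.1.2.trans hXc.2.symm)) i
    (Finset.mem_univ i)

theorem update_zero_mem_restrictedOmega (hXc : Xc ∈ Omega n xmax d) {i : Fin n}
    (hx : (Xc i).2 = 0) : Function.update Xc i (0, 0) ∈ RestrictedOmega n xmax d Xc := by
  have hsnd : ∀ j, (Function.update Xc i (0, 0) j).2 = (Xc j).2 := by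
    intro j
    rcases eq_or_ne j i with rfl | hj
    · simp [hx]
    · simp [hj]
  refine ⟨⟨fun j => ?_, by simp only [hsnd, hXc.2]⟩, fun j => ⟨?_, (hsnd j).le⟩⟩
  · rcases eq_or_ne j i with rfl | hj
    · simpa using Gen.zero_mem (xmax j)
    · simpa [hj] using hXc.1 j
  · rcases eq_or_ne j i with rfl | hj
    · simpa using Gen.fst_nonneg (hXc.1 j)
    · simp [hj]

end Restricted

theorem sum_cost_update_zero_lt {ι : Type*} [Fintype ι] [DecidableEq ι] {w : ι → ℝ}
    {c : ι → ℝ → ℝ} {Xc : ι → ℝ × ℝ} {i : ι} (hwi : 0 < w i) (hu : (Xc i).1 = 1) (hx : (Xc i).2 = 0) :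
    ∑ j, Cost (w j) (c j) (Function.update Xc i (0, 0) j) < ∑ j, Cost (w j) (c j) (Xc j) := by
  refine Finset.sum_lt_sum (fun j _ => ?_) ⟨i, Finset.mem_univ i, ?_⟩
  · rcases eq_or_ne j i with rfl | hj
    · simp [Cost, hu, hx, hwi.le]
    · simp [hj]
  · simp [Cost, hu, hx, hwi]

theorem stmt_0_general (n : ℕ) (d : ℝ)
    (w xmax : Fin n → ℝ) (c : Fin n → ℝ → ℝ)
    (hw : ∀ i, 0 ≤ w i)
    (Xc : Fin n → ℝ × ℝ) (hXc : Xc ∈ Omega n xmax d) :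
    (Xc ∈ {X ∈ Omega n xmax d | ∀ i, (X i).1 ≤ (Xc i).1 ∧ (X i).2 ≤ (Xc i).2} ∧
      ∀ X ∈ {X ∈ Omega n xmax d | ∀ i, (X i).1 ≤ (Xc i).1 ∧ (X i).2 ≤ (Xc i).2},
        ∑ i, Cost (w i) (c i) (Xc i) ≤ ∑ i, Cost (w i) (c i) (X i))
    ↔ ¬ ∃ i, w i ≠ 0 ∧ (Xc i).1 = 1 ∧ (Xc i).2 = 0 := by
  constructor
  · rintro ⟨-, hmin⟩ ⟨i, hwi, hu, hx⟩
    exact (hmin _ (update_zero_mem_restrictedOmega hXc hx)).not_gt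
      (sum_cost_update_zero_lt ((hw i).lt_of_ne' hwi) hu hx)
  · intro hidle
    refine ⟨self_mem_restrictedOmega hXc, fun X hX => (Finset.sum_congr rfl fun i _ => ?_).le⟩
    exact (cost_eq_of_snd_eq (hX.1.1 i) (hXc.1 i) (hX.2 i).1
      (snd_eq_of_mem_restrictedOmega hXc hX i) fun h => hidle ⟨i, h⟩).symm

/-- Proposition 1: a primal-feasible point `Xc` is a fixed point of the restricted
minimization correspondence (i.e. `Xc ∈ Ωᶜ`) iff it has no generator `i` with
`w i ≠ 0`, `u i = 1` and `x i = 0` (i.e. `Xc ∈ Ω'`). -/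
theorem stmt_0 (n : ℕ) (d : ℝ) (hd : 0 < d)
    (w xmax : Fin n → ℝ) (c : Fin n → ℝ → ℝ)
    (hxmax : ∀ i, 0 < xmax i) (hw : ∀ i, 0 ≤ w i)
    (hconv : ∀ i, ConvexOn ℝ (Set.Icc 0 (xmax i)) (c i))
    (hmono : ∀ i, MonotoneOn (c i) (Set.Icc 0 (xmax i)))
    (hcont : ∀ i, ContinuousOn (c i) (Set.Icc 0 (xmax i)))
    (hc0 : ∀ i, c i 0 = 0)
    (hfeas : d ≤ ∑ i, xmax i)
    (Xc : Fin n → ℝ × ℝ) (hXc : Xc ∈ Omega n xmax d) :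
    (Xc ∈ {X ∈ Omega n xmax d | ∀ i, (X i).1 ≤ (Xc i).1 ∧ (X i).2 ≤ (Xc i).2} ∧
      ∀ X ∈ {X ∈ Omega n xmax d | ∀ i, (X i).1 ≤ (Xc i).1 ∧ (X i).2 ≤ (Xc i).2},
        ∑ i, Cost (w i) (c i) (Xc i) ≤ ∑ i, Cost (w i) (c i) (X i))
    ↔ ¬ ∃ i, w i ≠ 0 ∧ (Xc i).1 = 1 ∧ (Xc i).2 = 0 :=
  stmt_0_general n d w xmax c hw Xc hXc
end
end

section
/- Suppose generator i has w_i = 0 and let ε_i > 0. Let (u*, x*) ∈ G_i with x_i^c,min ≤ x* ≤ x_i^c,max (in particular, (u*,x*) may be the i-th component of any primal minimizer). Then (u*, x*) maximizes (u,x) ↦ p·x − C_i(u,x) over G_i if and only if it maximizes the same function over G̃_i(ε_i). -/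
/-!
With zero start-up cost the profit `p x - c_i(x)` depends on `x` alone and is concave on
`[0, x_i^max]`. Because `ε > 0`, the on-part of `G̃_i(ε)` is an interval that is a neighbourhood of
`x*` in `[0, x_i^max]`, so a maximizer over it is a local, hence global, maximizer over `G_i`.
-/

noncomputable section

/-- `x_i^{c,min}`. -/
def xcmin (n : ℕ) (xmax : Fin n → ℝ) (d : ℝ) (i : Fin n) : ℝ :=
  max (d - ∑ j ∈ Finset.univ.erase i, xmax j) 0

/-- `x_i^{c,max}`. -/
def xcmax (n : ℕ) (xmax : Fin n → ℝ) (d : ℝ) (i : Fin n) : ℝ :=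
  min d (xmax i)

/-- `G̃_i(ε)`. -/
def Gtilde (xmax xcmin xcmax ε : ℝ) : Set (ℝ × ℝ) :=
  {((0 : ℝ), (0 : ℝ))} ∪
    {ux | ux.1 = 1 ∧ max (xcmin - ε) 0 ≤ ux.2 ∧ ux.2 ≤ min (xcmax + ε) xmax}

open Set Filter Topology

variable {M a b ε : ℝ} {f : ℝ → ℝ}

theorem Gen.snd_mem_Icc (hM : 0 ≤ M) {ux : ℝ × ℝ} (h : ux ∈ Gen M) : ux.2 ∈ Icc 0 M := by
  obtain ⟨hu | hu, hx0, hxM⟩ := h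
  · rw [hu, zero_mul] at hxM
    exact ⟨hx0, hxM.trans hM⟩
  · rw [hu, one_mul] at hxM
    exact ⟨hx0, hxM⟩

theorem Gtilde_subset_Gen : Gtilde M a b ε ⊆ Gen M := by
  rintro ⟨u, x⟩ (h | ⟨hu, hlo, hhi⟩)
  · obtain ⟨rfl, rfl⟩ := Prod.mk.inj h
    simp [Gen]
  · refine ⟨Or.inr hu, (le_max_right _ _).trans hlo, ?_⟩
    rw [show u = 1 from hu, one_mul]
    exact hhi.trans (min_le_right _ _)

theorem mem_Gtilde_of_mem_Gen (hε : 0 ≤ ε) {u x : ℝ} (h : (u, x) ∈ Gen M)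
    (hax : a ≤ x) (hxb : x ≤ b) : (u, x) ∈ Gtilde M a b ε := by
  obtain ⟨rfl | rfl, hx0, hxM⟩ := h
  · left
    rw [show x = 0 from le_antisymm (by simpa using hxM) hx0]
    rfl
  · right
    exact ⟨rfl, max_le (by linarith) hx0, le_min (by linarith) (by simpa using hxM)⟩

theorem Icc_mem_nhdsWithin_Icc_of_mem_Icc (hε : 0 < ε) {x : ℝ} (hax : a ≤ x) (hxb : x ≤ b) :
    Icc (max (a - ε) 0) (min (b + ε) M) ∈ 𝓝[Icc 0 M] x := by
  have hIoo : Ioo (a - ε) (b + ε) ∈ 𝓝 x := Ioo_mem_nhds (by linarith) (by linarith)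
  refine mem_of_superset (inter_mem_nhdsWithin _ hIoo) ?_
  rintro y ⟨⟨hy0, hyM⟩, hya, hyb⟩
  exact ⟨max_le hya.le hy0, le_min hyb.le hyM⟩

theorem isMaxOn_Gen_of_isMaxOn_Icc (hM : 0 ≤ M) {x : ℝ} (h : IsMaxOn f (Icc 0 M) x) (u : ℝ) :
    IsMaxOn (fun ux : ℝ × ℝ => f ux.2) (Gen M) (u, x) :=
  fun _ hy => h (Gen.snd_mem_Icc hM hy)

theorem isMaxOn_Icc_of_isMaxOn_Gtilde {u x : ℝ}
    (h : IsMaxOn (fun ux : ℝ × ℝ => f ux.2) (Gtilde M a b ε) (u, x)) :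
    IsMaxOn f (Icc (max (a - ε) 0) (min (b + ε) M)) x :=
  fun y ⟨hlo, hhi⟩ => h (Or.inr ⟨rfl, hlo, hhi⟩ : ((1 : ℝ), y) ∈ Gtilde M a b ε)

theorem isMaxOn_Icc_of_isMaxOn_enlarged (hf : ConcaveOn ℝ (Icc 0 M) f) (hε : 0 < ε) {x : ℝ}
    (hx : x ∈ Icc 0 M) (hax : a ≤ x) (hxb : x ≤ b)
    (h : IsMaxOn f (Icc (max (a - ε) 0) (min (b + ε) M)) x) : IsMaxOn f (Icc 0 M) x :=
  IsMaxOn.of_isLocalMaxOn_of_concaveOn hx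
    (h.filter_mono (le_principal_iff.2 (Icc_mem_nhdsWithin_Icc_of_mem_Icc hε hax hxb))) hf

theorem stmt_2_general (n : ℕ) (d : ℝ)
    (w xmax : Fin n → ℝ) (c : Fin n → ℝ → ℝ)
    (hxmax : ∀ i, 0 < xmax i)
    (hconv : ∀ i, ConvexOn ℝ (Set.Icc 0 (xmax i)) (c i))
    (i : Fin n) (hwi : w i = 0) (ε : ℝ) (hε : 0 < ε) (p : ℝ)
    (us xs : ℝ) (hmem : (us, xs) ∈ Gen (xmax i))
    (hlo : xcmin n xmax d i ≤ xs) (hhi : xs ≤ xcmax n xmax d i) :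
    IsMaxOn (fun ux => p * ux.2 - Cost (w i) (c i) ux) (Gen (xmax i)) (us, xs)
    ↔ ((us, xs) ∈ Gtilde (xmax i) (xcmin n xmax d i) (xcmax n xmax d i) ε ∧
        IsMaxOn (fun ux => p * ux.2 - Cost (w i) (c i) ux)
          (Gtilde (xmax i) (xcmin n xmax d i) (xcmax n xmax d i) ε) (us, xs)) := by
  have hM : 0 ≤ xmax i := (hxmax i).le
  have hprofit : (fun ux => p * ux.2 - Cost (w i) (c i) ux) = fun ux => p * ux.2 - c i ux.2 := by
    simp only [Cost, hwi, zero_mul, zero_add]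
  have hconc : ConcaveOn ℝ (Icc 0 (xmax i)) (fun x => p * x - c i x) :=
    ((LinearMap.mulLeft ℝ p).concaveOn (convex_Icc _ _)).sub (hconv i)
  rw [hprofit]
  refine ⟨fun h => ⟨mem_Gtilde_of_mem_Gen hε.le hmem hlo hhi, h.on_subset Gtilde_subset_Gen⟩, ?_⟩
  rintro ⟨-, h⟩
  exact isMaxOn_Gen_of_isMaxOn_Icc hM (isMaxOn_Icc_of_isMaxOn_enlarged hconc hε
    (Gen.snd_mem_Icc hM hmem) hlo hhi (isMaxOn_Icc_of_isMaxOn_Gtilde h)) us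

/-- Proposition 3: for a generator `i` with zero start-up cost and any `ε > 0`,
a point `(u*,x*) ∈ G_i` with `x^c,min ≤ x* ≤ x^c,max` maximizes the profit
`p·x − C_i(u,x)` over `G_i` iff it maximizes it over `G̃_i(ε)`. -/
theorem stmt_2 (n : ℕ) (d : ℝ) (hd : 0 < d)
    (w xmax : Fin n → ℝ) (c : Fin n → ℝ → ℝ)
    (hxmax : ∀ i, 0 < xmax i) (hw : ∀ i, 0 ≤ w i)
    (hconv : ∀ i, ConvexOn ℝ (Set.Icc 0 (xmax i)) (c i))
    (hmono : ∀ i, MonotoneOn (c i) (Set.Icc 0 (xmax i)))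
    (hcont : ∀ i, ContinuousOn (c i) (Set.Icc 0 (xmax i)))
    (hc0 : ∀ i, c i 0 = 0)
    (hfeas : d ≤ ∑ i, xmax i)
    (i : Fin n) (hwi : w i = 0) (ε : ℝ) (hε : 0 < ε) (p : ℝ)
    (us xs : ℝ) (hmem : (us, xs) ∈ Gen (xmax i))
    (hlo : xcmin n xmax d i ≤ xs) (hhi : xs ≤ xcmax n xmax d i) :
    IsMaxOn (fun ux => p * ux.2 - Cost (w i) (c i) ux) (Gen (xmax i)) (us, xs)
    ↔ ((us, xs) ∈ Gtilde (xmax i) (xcmin n xmax d i) (xcmax n xmax d i) ε ∧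
        IsMaxOn (fun ux => p * ux.2 - Cost (w i) (c i) ux)
          (Gtilde (xmax i) (xcmin n xmax d i) (xcmax n xmax d i) ε) (us, xs)) :=
  stmt_2_general n d w xmax c hxmax hconv i hwi ε hε p us xs hmem hlo hhi
end
end

section
/- Suppose ε_i > 0 for all i. Then: (a) P̂⁺(ε) = P̃⁺(ε); (b) π̂_i(p,ε_i) = π̃_i(p,ε_i) for every p ∈ P̃⁺(ε) and every i; (c) v̂^D(ε) = ṽ^D(ε). In other words, relaxing each modified feasible set G̃_i(ε_i) to Ĝ_i(ε_i) (allowing all outputs below x_i^c,max + ε_i) changes neither the set of dual maximizers, nor the optimal profits at those maximizers, nor the dual optimal value. -/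
noncomputable section

/-- The relaxed modified feasible set `Ĝ_i(ε)`. -/
def Ghat (xmax xcmax ε : ℝ) : Set (ℝ × ℝ) :=
  {ux ∈ Gen xmax | ux.2 ≤ xcmax + ε}

set_option maxHeartbeats 1000000

lemma convex_three {xm : ℝ} {c : ℝ → ℝ} (hconv : ConvexOn ℝ (Set.Icc 0 xm) c)
    {a b y : ℝ} (ha : a ∈ Set.Icc 0 xm) (hb : b ∈ Set.Icc 0 xm)
    (hab : a < b) (hay : a ≤ y) (hyb : y ≤ b) :
    (b - a) * c y ≤ (b - y) * c a + (y - a) * c b := by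
  have hs : (0:ℝ) < b - a := by linarith
  have hmu : (0:ℝ) ≤ (b - y) / (b - a) := div_nonneg (by linarith) hs.le
  have hnu : (0:ℝ) ≤ (y - a) / (b - a) := div_nonneg (by linarith) hs.le
  have hsum : (b - y) / (b - a) + (y - a) / (b - a) = 1 := by
    rw [← add_div, show b - y + (y - a) = b - a by ring]
    exact div_self hs.ne'
  have h2 := hconv.2 ha hb hmu hnu hsum
  have h1 : ((b - y)/(b-a)) • a + ((y - a)/(b-a)) • b = y := by
    simp only [smul_eq_mul]
    field_simp
    ring
  rw [h1] at h2
  simp only [smul_eq_mul] at h2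
  have h3 := mul_le_mul_of_nonneg_left h2 hs.le
  calc (b-a) * c y ≤ (b-a) * ((b - y)/(b-a) * c a + (y - a)/(b-a) * c b) := h3
    _ = (b - y) * c a + (y - a) * c b := by field_simp

lemma Gtilde_subset_Ghat {xm cmin cmax e : ℝ} (hcmax : 0 ≤ cmax) (he : 0 ≤ e) :
    Gtilde xm cmin cmax e ⊆ Ghat xm cmax e := by
  rintro ⟨u, x⟩ (h | h)
  · simp only [Set.mem_singleton_iff, Prod.mk.injEq] at h
    obtain ⟨rfl, rfl⟩ := h
    exact ⟨⟨Or.inl rfl, le_refl 0, by simp⟩, by simpa using add_nonneg hcmax he⟩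
  · obtain ⟨rfl, h1, h2⟩ := h
    exact ⟨⟨Or.inr rfl, le_trans (le_max_right _ _) h1,
      by simpa using le_trans h2 (min_le_right _ _)⟩, le_trans h2 (min_le_left _ _)⟩

lemma Ghat_bounds {xm cmax e : ℝ} (hxm : 0 ≤ xm) :
    ∀ ux ∈ Ghat xm cmax e, 0 ≤ ux.2 ∧ ux.2 ≤ xm := by
  rintro ⟨u, x⟩ ⟨⟨hu, hx0, hxu⟩, -⟩
  refine ⟨hx0, ?_⟩
  rcases hu with h | h <;> rw [h] at hxu <;> simp at hxu <;> linarith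

lemma price_incr {w xm : ℝ} {c : ℝ → ℝ} {S : Set (ℝ × ℝ)}
    (hS : ∀ ux ∈ S, 0 ≤ ux.2 ∧ ux.2 ≤ xm)
    {p q πp πq : ℝ}
    (hp : IsGreatest ((fun ux => p * ux.2 - Cost w c ux) '' S) πp)
    (hq : IsGreatest ((fun ux => q * ux.2 - Cost w c ux) '' S) πq) :
    πq ≤ πp + |q - p| * xm := by
  obtain ⟨ux, hux, hval⟩ := hq.1
  have h1 : p * ux.2 - Cost w c ux ≤ πp := hp.2 ⟨ux, hux, rfl⟩
  have h2 := hS ux hux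
  have h3 : (q - p) * ux.2 ≤ |q - p| * xm :=
    le_trans (mul_le_mul_of_nonneg_right (le_abs_self _) h2.1)
      (mul_le_mul_of_nonneg_left h2.2 (abs_nonneg _))
  have h4 : πq = (p * ux.2 - Cost w c ux) + (q - p) * ux.2 := by rw [← hval]; ring
  linarith

lemma gap_key
    {w xm cmin cmax e : ℝ} {c : ℝ → ℝ}
    (hxm : 0 < xm) (he : 0 < e) (hw : 0 ≤ w)
    (hcmin0 : 0 ≤ cmin) (hcminmax : cmin ≤ cmax) (hcmaxxm : cmax ≤ xm)
    (hconv : ConvexOn ℝ (Set.Icc 0 xm) c)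
    (hmono : MonotoneOn c (Set.Icc 0 xm))
    (hc0 : c 0 = 0)
    {πt' πh' : ℝ → ℝ}
    (hπt : ∀ p, IsGreatest ((fun ux => p * ux.2 - Cost w c ux) ''
      Gtilde xm cmin cmax e) (πt' p))
    (hπh : ∀ p, IsGreatest ((fun ux => p * ux.2 - Cost w c ux) ''
      Ghat xm cmax e) (πh' p))
    (p : ℝ) (hgap : πt' p < πh' p) :
    e < cmin ∧ p * e < c xm ∧
      ∃ tb > 0, ∀ t, 0 < t → t ≤ tb →
        πt' (p + t) ≤ πt' p + t * (cmin - e) ∧ πh' (p + t) ≤ πh' p + t * (cmin - e) := by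
  have hcmax0 : 0 ≤ cmax := hcmin0.trans hcminmax
  have h00t : ((0:ℝ), (0:ℝ)) ∈ Gtilde xm cmin cmax e := Set.mem_union_left _ rfl
  have hπt0 : 0 ≤ πt' p := by
    have := (hπt p).2 ⟨_, h00t, rfl⟩
    simpa [Cost, hc0] using this
  obtain ⟨⟨u, x⟩, hmem, hval⟩ := (hπh p).1
  obtain ⟨⟨hu, hx0, hxu⟩, hxce⟩ := hmem
  dsimp only at hu hx0 hxu hxce hval
  rcases hu with hu0 | hu1
  · exfalso
    rw [hu0] at hxu
    rw [zero_mul] at hxu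
    have hx : x = 0 := le_antisymm hxu hx0
    rw [hu0, hx] at hval
    simp [Cost, hc0] at hval
    linarith
  rw [hu1] at hxu hval
  rw [one_mul] at hxu
  have hvalx : p * x - (w + c x) = πh' p := by
    simp only [Cost] at hval
    linarith [hval]
  have hxmem : x ∈ Set.Icc 0 xm := ⟨hx0, hxu⟩
  have hcx : 0 ≤ c x := by
    have := hmono (Set.mem_Icc.mpr ⟨le_refl 0, hxm.le⟩) hxmem hx0
    rwa [hc0] at this
  have hxltm : x < max (cmin - e) 0 := by
    by_contra hcon
    push_neg at hcon
    have : πh' p ≤ πt' p := by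
      rw [← hvalx]
      have := (hπt p).2 ⟨(1, x), Set.mem_union_right _ ⟨rfl, hcon, le_min hxce hxu⟩, rfl⟩
      simpa [Cost] using this
    linarith
  have hmaxpos : 0 < max (cmin - e) 0 := lt_of_le_of_lt hx0 hxltm
  have hecmin : e < cmin := by
    by_contra h
    push_neg at h
    rw [max_eq_right (by linarith)] at hmaxpos
    exact lt_irrefl 0 hmaxpos
  have hm0 : 0 < cmin - e := by linarith
  rw [max_eq_left hm0.le] at hxltm
  set m := cmin - e with hm
  have hmxm : m < xm := by simp only [hm]; linarith
  have hmmem : m ∈ Set.Icc 0 xm := ⟨hm0.le, hmxm.le⟩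
  have hcm : 0 ≤ c m := by
    have := hmono (Set.mem_Icc.mpr ⟨le_refl 0, hxm.le⟩) hmmem hm0.le
    rwa [hc0] at this
  have hpx : 0 < p * x := by linarith
  have hxpos : 0 < x := by
    rcases lt_or_eq_of_le hx0 with h | h
    · exact h
    · exfalso; rw [← h] at hpx; simp at hpx
  have hppos : 0 < p := by
    rcases mul_pos_iff.mp hpx with ⟨h1, _⟩ | ⟨_, h2⟩
    · exact h1
    · linarith
  have hmtilde : (1, m) ∈ Gtilde xm cmin cmax e := by
    refine Set.mem_union_right _ ⟨rfl, ?_, le_min (by simp only [hm]; linarith) hmxm.le⟩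
    rw [max_eq_left hm0.le]
  have hπtm : p * m - (w + c m) ≤ πt' p := by
    have := (hπt p).2 ⟨(1, m), hmtilde, rfl⟩
    simp only [Cost] at this
    linarith [this]
  -- chord bound, multiplied form
  have hchord : ∀ y, m ≤ y → y ≤ xm →
      (m - x) * (p * y - (w + c y)) ≤ (m - x) * πt' p - (πh' p - πt' p) * (y - m) := by
    intro y h1 h2
    rcases eq_or_lt_of_le h1 with rfl | h1'
    · nlinarith [hπtm, hxltm]
    · have hymem : y ∈ Set.Icc 0 xm := ⟨by linarith, h2⟩
      have hcv := convex_three hconv hxmem hymem (lt_trans hxltm h1') hxltm.le h1'.le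
      nlinarith [mul_le_mul_of_nonneg_left hπtm (show (0:ℝ) ≤ y - x by linarith),
        hcv, hvalx, hxltm, h1']
  -- price bound
  have hpe : p * e < c xm := by
    have hcv2 := convex_three hconv hxmem (Set.mem_Icc.mpr ⟨hxm.le, le_refl xm⟩)
      (lt_of_lt_of_le hxltm hmxm.le) hxltm.le hmxm.le
    have hD : p * (m - x) < c m - c x := by linarith
    have h5 : (m - x) * (p * (xm - m)) < (m - x) * c xm := by
      nlinarith [hcv2, hcm, mul_lt_mul_of_pos_right hD (show (0:ℝ) < xm - m by linarith)]
    have h6 : p * (xm - m) < c xm := lt_of_mul_lt_mul_left h5 (by linarith)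
    have h7 : p * e ≤ p * (xm - m) := mul_le_mul_of_nonneg_left (by simp only [hm]; linarith) hppos.le
    linarith
  refine ⟨hecmin, hpe, (πh' p - πt' p) / (m - x), div_pos (by linarith) (by linarith), ?_⟩
  intro t ht htle
  have htmx : t * (m - x) ≤ πh' p - πt' p := by
    rw [le_div_iff₀ (by linarith : (0:ℝ) < m - x)] at htle
    exact htle
  have inc : ∀ (S : Set (ℝ × ℝ)) (πp πq : ℝ), Gtilde xm cmin cmax e ⊆ S → S ⊆ Ghat xm cmax e →
      IsGreatest ((fun ux => p * ux.2 - Cost w c ux) '' S) πp →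
      IsGreatest ((fun ux => (p + t) * ux.2 - Cost w c ux) '' S) πq →
      πq ≤ πp + t * m := by
    intro S πp πq hS1 hS2 hgp hgq
    have hπtle : πt' p ≤ πp := by
      obtain ⟨a, haS, hav⟩ := (hπt p).1
      exact hav ▸ hgp.2 ⟨a, hS1 haS, rfl⟩
    have hπp0 : 0 ≤ πp := by
      have := hgp.2 ⟨_, hS1 h00t, rfl⟩
      simpa [Cost, hc0] using this
    obtain ⟨⟨u', y⟩, hyS, hyval⟩ := hgq.1
    obtain ⟨⟨hu', hy0, hyu⟩, hyce⟩ := hS2 hyS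
    dsimp only at hu' hy0 hyu hyce hyval
    rcases hu' with h0 | h1
    · subst h0
      rw [zero_mul] at hyu
      have hy : y = 0 := le_antisymm hyu hy0
      rw [hy] at hyval
      simp [Cost, hc0] at hyval
      nlinarith [mul_pos ht hm0]
    · subst h1
      rw [one_mul] at hyu
      have hyval' : (p + t) * y - (w + c y) = πq := by
        simp only [Cost] at hyval
        linarith [hyval]
      have hyp : p * y - (w + c y) ≤ πp := by
        have := hgp.2 ⟨(1, y), hyS, rfl⟩
        simp only [Cost] at this
        linarith [this]
      rcases le_or_gt y m with hym | hym
      · have hty : t * y ≤ t * m := mul_le_mul_of_nonneg_left hym ht.le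
        nlinarith [hyval', hyp, hty]
      · have hch := hchord y hym.le hyu
        have h7 : (m - x) * (p * y - (w + c y)) ≤ (m - x) * (πt' p - t * (y - m)) := by
          nlinarith [mul_le_mul_of_nonneg_right htmx (show (0:ℝ) ≤ y - m by linarith)]
        have h8 : p * y - (w + c y) ≤ πt' p - t * (y - m) :=
          le_of_mul_le_mul_left h7 (by linarith)
        nlinarith [hyval', h8, hπtle]
  constructor
  · exact inc _ _ _ (le_refl _) (Gtilde_subset_Ghat hcmax0 he.le) (hπt p) (hπt (p + t))
  · exact inc _ _ _ (Gtilde_subset_Ghat hcmax0 he.le) (le_refl _) (hπh p) (hπh (p + t))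

/-- Proposition 4: relaxing each `G̃_i(ε_i)` to `Ĝ_i(ε_i)` changes neither the set of
dual maximizers, nor the optimal profits at those maximizers, nor the dual value:
(a) `P̂⁺(ε) = P̃⁺(ε)`; (b) `π̂_i(p,ε_i) = π̃_i(p,ε_i)` on `P̃⁺(ε)`; (c) `v̂^D(ε) = ṽ^D(ε)`. -/
theorem stmt_3 (n : ℕ) (d : ℝ) (hd : 0 < d)
    (w xmax : Fin n → ℝ) (c : Fin n → ℝ → ℝ)
    (hxmax : ∀ i, 0 < xmax i) (hw : ∀ i, 0 ≤ w i)
    (hconv : ∀ i, ConvexOn ℝ (Set.Icc 0 (xmax i)) (c i))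
    (hmono : ∀ i, MonotoneOn (c i) (Set.Icc 0 (xmax i)))
    (hcont : ∀ i, ContinuousOn (c i) (Set.Icc 0 (xmax i)))
    (hc0 : ∀ i, c i 0 = 0)
    (hfeas : d ≤ ∑ i, xmax i)
    (ε : Fin n → ℝ) (hε : ∀ i, 0 < ε i)
    (πt πh : ℝ → Fin n → ℝ)
    (hπt : ∀ p i, IsGreatest ((fun ux => p * ux.2 - Cost (w i) (c i) ux) ''
        Gtilde (xmax i) (xcmin n xmax d i) (xcmax n xmax d i) (ε i)) (πt p i))
    (hπh : ∀ p i, IsGreatest ((fun ux => p * ux.2 - Cost (w i) (c i) ux) ''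
        Ghat (xmax i) (xcmax n xmax d i) (ε i)) (πh p i))
    (vDt vDh : ℝ)
    (hvDt : IsLUB (Set.range fun p => p * d - ∑ i, πt p i) vDt)
    (hvDh : IsLUB (Set.range fun p => p * d - ∑ i, πh p i) vDh) :
    {p : ℝ | ∀ q, q * d - ∑ i, πh q i ≤ p * d - ∑ i, πh p i}
      = {p : ℝ | ∀ q, q * d - ∑ i, πt q i ≤ p * d - ∑ i, πt p i}
    ∧ (∀ p ∈ {p : ℝ | ∀ q, q * d - ∑ i, πt q i ≤ p * d - ∑ i, πt p i},
        ∀ i, πh p i = πt p i)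
    ∧ vDh = vDt := by
  -- basic per-generator facts
  have hsum : ∀ i : Fin n, ∑ j ∈ Finset.univ.erase i, xmax j = (∑ j, xmax j) - xmax i := by
    intro i
    have := Finset.sum_erase_add Finset.univ xmax (Finset.mem_univ i)
    linarith
  have herase : ∀ i : Fin n, 0 ≤ ∑ j ∈ Finset.univ.erase i, xmax j :=
    fun i => Finset.sum_nonneg fun j _ => (hxmax j).le
  have hcmin0 : ∀ i, 0 ≤ xcmin n xmax d i := fun i => le_max_right _ _
  have hcminmax : ∀ i, xcmin n xmax d i ≤ xcmax n xmax d i := by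
    intro i
    unfold xcmin xcmax
    exact max_le (le_min (by linarith [herase i]) (by linarith [hsum i, hfeas]))
      (le_min hd.le (hxmax i).le)
  have hcmaxxm : ∀ i, xcmax n xmax d i ≤ xmax i := fun i => min_le_right _ _
  have hcmax0 : ∀ i, 0 ≤ xcmax n xmax d i := fun i => (hcmin0 i).trans (hcminmax i)
  have hcxm0 : ∀ i, 0 ≤ c i (xmax i) := by
    intro i
    have := (hmono i) (Set.mem_Icc.mpr ⟨le_refl 0, (hxmax i).le⟩)
      (Set.mem_Icc.mpr ⟨(hxmax i).le, le_refl _⟩) (hxmax i).le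
    rwa [hc0 i] at this
  have hGsub : ∀ i, Gtilde (xmax i) (xcmin n xmax d i) (xcmax n xmax d i) (ε i)
      ⊆ Ghat (xmax i) (xcmax n xmax d i) (ε i) :=
    fun i => Gtilde_subset_Ghat (hcmax0 i) (hε i).le
  have hsub : ∀ p i, πt p i ≤ πh p i := by
    intro p i
    obtain ⟨a, ha, hav⟩ := (hπt p i).1
    exact hav ▸ (hπh p i).2 ⟨a, hGsub i ha, rfl⟩
  have hbh : ∀ i, ∀ ux ∈ Ghat (xmax i) (xcmax n xmax d i) (ε i),
      0 ≤ ux.2 ∧ ux.2 ≤ xmax i := fun i => Ghat_bounds (hxmax i).le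
  have hbt : ∀ i, ∀ ux ∈ Gtilde (xmax i) (xcmin n xmax d i) (xcmax n xmax d i) (ε i),
      0 ≤ ux.2 ∧ ux.2 ≤ xmax i := fun i ux hux => hbh i ux (hGsub i hux)
  -- continuity of the dual objective for πt
  have hlip : ∀ i, Continuous (fun p => πt p i) := by
    intro i
    have : LipschitzWith (Real.toNNReal (xmax i)) (fun p => πt p i) := by
      apply LipschitzWith.of_dist_le_mul
      intro a b
      have h1 := price_incr (hbt i) (hπt b i) (hπt a i)
      have h2 := price_incr (hbt i) (hπt a i) (hπt b i)
      rw [Real.dist_eq, Real.dist_eq, Real.coe_toNNReal _ (hxmax i).le, abs_sub_le_iff]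
      rw [abs_sub_comm] at h2
      constructor <;> nlinarith [abs_nonneg (a - b)]
    exact this.continuous
  have hφtcont : Continuous (fun p => p * d - ∑ i, πt p i) :=
    (continuous_id.mul continuous_const).sub
      (continuous_finset_sum _ fun i _ => hlip i)
  -- key increment lemma
  have keyIncr : ∀ p i, πt p i < πh p i →
      (p * ε i < c i (xmax i)) ∧ ∃ tb > 0, ∀ t, 0 < t → t ≤ tb →
        (p * d - ∑ j, πt p j) + t * ε i ≤ (p + t) * d - ∑ j, πt (p + t) j ∧
        (p * d - ∑ j, πh p j) + t * ε i ≤ (p + t) * d - ∑ j, πh (p + t) j := by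
    intro p i hgap
    obtain ⟨hecmin, hpe, tb, htb0, hbd⟩ := gap_key (hxmax i) (hε i) (hw i) (hcmin0 i)
      (hcminmax i) (hcmaxxm i) (hconv i) (hmono i) (hc0 i)
      (fun q => hπt q i) (fun q => hπh q i) p hgap
    have hcmineq : xcmin n xmax d i = d - ∑ j ∈ Finset.univ.erase i, xmax j := by
      have hpos : 0 < xcmin n xmax d i := lt_trans (hε i) hecmin
      unfold xcmin at hpos ⊢
      rcases le_or_gt (d - ∑ j ∈ Finset.univ.erase i, xmax j) 0 with h | h
      · rw [max_eq_right h] at hpos; linarith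
      · exact max_eq_left h.le
    refine ⟨hpe, tb, htb0, ?_⟩
    intro t ht htle
    obtain ⟨hbt', hbh'⟩ := hbd t ht htle
    have habs : |p + t - p| = t := by
      rw [add_sub_cancel_left]; exact abs_of_pos ht
    have hsplit : ∀ f : Fin n → ℝ, ∑ j, f j = f i + ∑ j ∈ Finset.univ.erase i, f j :=
      fun f => (Finset.add_sum_erase _ f (Finset.mem_univ i)).symm
    have key : ∀ (π' : ℝ → Fin n → ℝ), (πt = π' ∨ πh = π') →
        π' (p + t) i ≤ π' p i + t * (xcmin n xmax d i - ε i) →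
        (p * d - ∑ j, π' p j) + t * ε i ≤ (p + t) * d - ∑ j, π' (p + t) j := by
      intro π' hπ' hi
      have hrest : ∑ j ∈ Finset.univ.erase i, π' (p + t) j ≤
          ∑ j ∈ Finset.univ.erase i, (π' p j + t * xmax j) := by
        apply Finset.sum_le_sum
        intro j _
        have : π' (p + t) j ≤ π' p j + |p + t - p| * xmax j := by
          rcases hπ' with rfl | rfl
          · exact price_incr (hbt j) (hπt p j) (hπt (p + t) j)
          · exact price_incr (hbh j) (hπh p j) (hπh (p + t) j)
        rwa [habs] at this
      have e1 := hsplit (π' (p + t))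
      have e2 := hsplit (fun j => π' p j + t * xmax j)
      have e3 := hsplit (π' p)
      have e4 : ∑ j, (π' p j + t * xmax j) = ∑ j, π' p j + t * ∑ j, xmax j := by
        rw [Finset.sum_add_distrib, Finset.mul_sum]
      have e5 := hsum i
      have e6 := hcmineq
      nlinarith [hrest, hi]
    constructor
    · exact key πt (Or.inl rfl) hbt'
    · exact key πh (Or.inr rfl) hbh'
  -- no gap at maximizers
  have noGapT : ∀ p, (∀ q, q * d - ∑ i, πt q i ≤ p * d - ∑ i, πt p i) →
      ∀ i, πh p i = πt p i := by
    intro p hp i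
    by_contra hne
    have hgap : πt p i < πh p i := lt_of_le_of_ne (hsub p i) (Ne.symm hne)
    obtain ⟨-, tb, htb0, hbd⟩ := keyIncr p i hgap
    have h1 := (hbd tb htb0 le_rfl).1
    have h2 := hp (p + tb)
    nlinarith [mul_pos htb0 (hε i)]
  have noGapH : ∀ p, (∀ q, q * d - ∑ i, πh q i ≤ p * d - ∑ i, πh p i) →
      ∀ i, πh p i = πt p i := by
    intro p hp i
    by_contra hne
    have hgap : πt p i < πh p i := lt_of_le_of_ne (hsub p i) (Ne.symm hne)
    obtain ⟨-, tb, htb0, hbd⟩ := keyIncr p i hgap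
    have h1 := (hbd tb htb0 le_rfl).2
    have h2 := hp (p + tb)
    nlinarith [mul_pos htb0 (hε i)]
  -- gaps only below K
  set K : ℝ := ∑ j, c j (xmax j) / ε j with hK
  have hKnonneg : ∀ (j : Fin n), 0 ≤ c j (xmax j) / ε j :=
    fun j => div_nonneg (hcxm0 j) (hε j).le
  have hgapK : ∀ p i, πt p i < πh p i → p < K := by
    intro p i hgap
    have h1 := (keyIncr p i hgap).1
    have h2 : p < c i (xmax i) / ε i := (lt_div_iff₀ (hε i)).mpr h1
    exact lt_of_lt_of_le h2 (Finset.single_le_sum (fun j _ => hKnonneg j) (Finset.mem_univ i))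
  -- central lemma: the tilde dual objective is bounded by vDh
  have central : ∀ p, p * d - ∑ i, πt p i ≤ vDh := by
    intro p
    set R : ℝ := max p K + 1 with hR
    have hpR : p ≤ R := le_trans (le_max_left _ _) (by simp only [hR]; linarith)
    obtain ⟨ps, hpsmem, hpsmax⟩ := (isCompact_Icc (a := p) (b := R)).exists_isMaxOn
      ⟨p, Set.mem_Icc.mpr ⟨le_rfl, hpR⟩⟩ hφtcont.continuousOn
    have hmax := isMaxOn_iff.mp hpsmax
    have hnogap : ∀ i, πh ps i = πt ps i := by
      intro i
      by_contra hne
      have hgap : πt ps i < πh ps i := lt_of_le_of_ne (hsub ps i) (Ne.symm hne)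
      have hltR : ps < R := lt_of_lt_of_le (hgapK ps i hgap)
        (le_trans (le_max_right p K) (by simp only [hR]; linarith))
      obtain ⟨-, tb, htb0, hbd⟩ := keyIncr ps i hgap
      have ht0 : 0 < min tb (R - ps) := lt_min htb0 (by linarith)
      have h1 := (hbd _ ht0 (min_le_left _ _)).1
      have hmem2 : ps + min tb (R - ps) ∈ Set.Icc p R := by
        constructor
        · linarith [hpsmem.1]
        · have := min_le_right tb (R - ps); linarith
      have h2 := hmax _ hmem2
      nlinarith [mul_pos ht0 (hε i)]
    have h1 : ∑ i, πh ps i = ∑ i, πt ps i := Finset.sum_congr rfl fun i _ => hnogap i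
    have h2 : ps * d - ∑ i, πh ps i ≤ vDh := hvDh.1 ⟨ps, rfl⟩
    have h3 := hmax p (Set.mem_Icc.mpr ⟨le_rfl, hpR⟩)
    linarith
  have hφhle : ∀ q, q * d - ∑ i, πh q i ≤ q * d - ∑ i, πt q i := by
    intro q
    have : ∑ i, πt q i ≤ ∑ i, πh q i := Finset.sum_le_sum fun i _ => hsub q i
    linarith
  have vDh_le : vDh ≤ vDt := by
    apply hvDh.2
    rintro y ⟨q, rfl⟩
    exact le_trans (hφhle q) (hvDt.1 ⟨q, rfl⟩)
  have vDt_le : vDt ≤ vDh := by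
    apply hvDt.2
    rintro y ⟨q, rfl⟩
    exact central q
  refine ⟨?_, fun p hp i => noGapT p hp i, le_antisymm vDh_le vDt_le⟩
  ext p
  simp only [Set.mem_setOf_eq]
  constructor
  · intro hp q
    have hng := noGapH p hp
    have heq : ∑ i, πh p i = ∑ i, πt p i := Finset.sum_congr rfl fun i _ => hng i
    have hub : vDh ≤ p * d - ∑ i, πh p i := by
      apply hvDh.2
      rintro y ⟨r, rfl⟩
      exact hp r
    have := central q
    linarith
  · intro hp q
    have hng := noGapT p hp
    have heq : ∑ i, πh p i = ∑ i, πt p i := Finset.sum_congr rfl fun i _ => hng i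
    have h1 := hφhle q
    have h2 := hp q
    linarith
end
end

section
/- Suppose ε_i > 0 for all i. Then: (a) P̄⁺(ε) = P̂⁺(ε); (b) π_i(p) = π̂_i(p,ε_i) for every p ∈ P̂⁺(ε) and every i ∈ Ī; (c) v̄^D(ε) = v̂^D(ε). In other words, in the dual problem the capacity truncation x ≤ x_i^c,max + ε_i can be dropped for every non-LNMGU generator without changing the set of dual maximizers, the optimal profits of the non-LNMGU generators at those maximizers, or the dual optimal value. -/
noncomputable section

/-!
Fix `i ∉ Î` and a price `p` with `π̂ᵢ(p) < πᵢ(p)`. Then the untruncated optimum produces some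
`x > d + εᵢ`, and since the LNMGU condition fails, the price exceeds the average cost at some
`y₀ ≤ d` (otherwise the tangent at `y₀` would make producing `x` unprofitable). The unit profit
`y ↦ p y - wᵢ - cᵢ(y)` is concave, so it is positive at `d` and smaller there than at `x` and at
`d + εᵢ`. These comparisons survive a small price cut `δ`, after which both optima still produce
more than `d`: both profits fall by more than `δ d`, so both dual objectives strictly increase
from `p` to `p - δ`.

Consequently both dual objectives are maximised only where `πᵢ = π̂ᵢ` for all `i ∉ Î`, i.e. where
they coincide. For the values, the leftmost point of a superlevel set of the (continuous)
truncated objective is such a point of coincidence.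
-/

open Set Filter Topology

def IsMaxProfit (S : Set (ℝ × ℝ)) (C : ℝ × ℝ → ℝ) (T : ℝ → ℝ) : Prop :=
  ∀ p, IsGreatest ((fun ux => p * ux.2 - C ux) '' S) (T p)

namespace IsMaxProfit

variable {S S' : Set (ℝ × ℝ)} {C : ℝ × ℝ → ℝ} {T T' : ℝ → ℝ}

lemma le (hT : IsMaxProfit S C T) {z : ℝ × ℝ} (hz : z ∈ S) (p : ℝ) : p * z.2 - C z ≤ T p :=
  (hT p).2 ⟨z, hz, rfl⟩

lemma exists_eq (hT : IsMaxProfit S C T) (p : ℝ) : ∃ z ∈ S, p * z.2 - C z = T p :=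
  (hT p).1

lemma le_of_subset (hT : IsMaxProfit S C T) (hT' : IsMaxProfit S' C T') (hSS' : S ⊆ S')
    (p : ℝ) : T p ≤ T' p := by
  obtain ⟨z, hz, hzT⟩ := hT.exists_eq p
  exact hzT ▸ hT'.le (hSS' hz) p

lemma monotone (hT : IsMaxProfit S C T) (hS : ∀ z ∈ S, 0 ≤ z.2) : Monotone T := by
  intro q p hqp
  obtain ⟨z, hz, hzT⟩ := hT.exists_eq q
  have := hT.le hz p
  nlinarith [hS z hz]

lemma lipschitzWith (hT : IsMaxProfit S C T) {K : ℝ} (hS : ∀ z ∈ S, |z.2| ≤ K) :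
    LipschitzWith K.toNNReal T := by
  refine LipschitzWith.of_le_add_mul' K fun p q => ?_
  obtain ⟨z, hz, hzT⟩ := hT.exists_eq p
  have hq := hT.le hz q
  have : (p - q) * z.2 ≤ K * dist p q :=
    calc (p - q) * z.2 ≤ |p - q| * |z.2| := (le_abs_self _).trans (abs_mul _ _).le
      _ ≤ |p - q| * K := mul_le_mul_of_nonneg_left (hS z hz) (abs_nonneg _)
      _ = K * dist p q := by rw [Real.dist_eq, mul_comm]
  linarith

lemma mul_lt_sub_of_forall_lt (hT : IsMaxProfit S C T) {z : ℝ × ℝ} (hz : z ∈ S) {p δ d : ℝ}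
    (hbeat : ∀ y ∈ S, y.2 ≤ d → (p - δ) * y.2 - C y < (p - δ) * z.2 - C z) (hδ : 0 < δ) :
    δ * d < T p - T (p - δ) := by
  obtain ⟨y, hy, hyT⟩ := hT.exists_eq (p - δ)
  have hyd : d < y.2 := by
    by_contra! h
    exact (hbeat y hy h).not_ge (hyT ▸ hT.le hz (p - δ))
  have := hT.le hy p
  nlinarith

end IsMaxProfit

/-- The LNMGU condition of the paper, with `dc` in the role of the right derivative `∂₊c`. -/
def IsLargeNaturalMonopoly (d w xm : ℝ) (c dc : ℝ → ℝ) : Prop :=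
  d < xm ∧ ∀ y ∈ Ioc 0 d, dc y < (w + c y) / y

section Generator

variable {w xm d ε : ℝ} {c : ℝ → ℝ} {π πh : ℝ → ℝ}

lemma mem_gen_iff {z : ℝ × ℝ} : z ∈ Gen xm ↔ z = (0, 0) ∨ z.1 = 1 ∧ z.2 ∈ Icc 0 xm := by
  obtain ⟨u, x⟩ := z
  simp only [Gen, mem_ofPred_eq, Prod.mk.injEq, mem_Icc]
  constructor
  · rintro ⟨rfl | rfl, h0, hx⟩
    · exact Or.inl ⟨rfl, le_antisymm (by simpa using hx) h0⟩
    · exact Or.inr ⟨rfl, h0, by simpa using hx⟩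
  · rintro (⟨rfl, rfl⟩ | ⟨rfl, h0, hx⟩) <;> simp [*]

lemma abs_le_of_mem_gen (hxm : 0 ≤ xm) {z : ℝ × ℝ} (hz : z ∈ Gen xm) : |z.2| ≤ xm := by
  rcases mem_gen_iff.1 hz with rfl | ⟨-, h0, h⟩
  · simpa using hxm
  · rwa [abs_of_nonneg h0]

lemma cost_zero (hc0 : c 0 = 0) : Cost w c (0, 0) = 0 := by
  simp [Cost, hc0]

lemma cost_one (y : ℝ) : Cost w c (1, y) = w + c y := by
  simp [Cost]

lemma concaveOn_profit (hconv : ConvexOn ℝ (Icc 0 xm) c) (p : ℝ) :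
    ConcaveOn ℝ (Icc 0 xm) fun y => p * y - (w + c y) :=
  ((LinearMap.mulLeft ℝ p).concaveOn (convex_Icc 0 xm)).sub
    ((convexOn_const w (convex_Icc 0 xm)).add hconv)

lemma IsMaxProfit.nonneg {S : Set (ℝ × ℝ)} {T : ℝ → ℝ} (hT : IsMaxProfit S (Cost w c) T)
    (hc0 : c 0 = 0) (h0 : ((0 : ℝ), (0 : ℝ)) ∈ S) (p : ℝ) : 0 ≤ T p := by
  simpa [cost_zero hc0] using hT.le h0 p

lemma profit_le_of_le_hasDerivWithinAt (hconv : ConvexOn ℝ (Icc 0 xm) c) {y₀ x D p : ℝ}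
    (hy₀ : 0 ≤ y₀) (hy₀x : y₀ < x) (hxm : x ≤ xm) (hD : HasDerivWithinAt c D (Icc y₀ xm) y₀)
    (hpD : p ≤ D) : p * x - (w + c x) ≤ p * y₀ - (w + c y₀) := by
  have hslope : D ≤ slope c y₀ x :=
    (hconv.subset (Icc_subset_Icc hy₀ le_rfl) (convex_Icc _ _)).le_slope_of_hasDerivWithinAt
      (left_mem_Icc.2 (hy₀x.le.trans hxm)) ⟨hy₀x.le, hxm⟩ hy₀x hD
  rw [slope_def_field, le_div_iff₀ (sub_pos.2 hy₀x)] at hslope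
  nlinarith [mul_le_mul_of_nonneg_right hpD (sub_pos.2 hy₀x).le]

lemma profit_lt_of_snd_le (hconv : ConvexOn ℝ (Icc 0 xm) c) (hc0 : c 0 = 0) {m q : ℝ}
    (hdm : d < m) (hm : m ≤ xm) (hpos : 0 < q * m - (w + c m))
    (hdm' : q * d - (w + c d) < q * m - (w + c m)) {z : ℝ × ℝ} (hz : z ∈ Gen xm)
    (hzd : z.2 ≤ d) : q * z.2 - Cost w c z < q * m - Cost w c (1, m) := by
  rw [cost_one]
  rcases mem_gen_iff.1 hz with rfl | ⟨hz1, hz0, -⟩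
  · simpa [cost_zero hc0] using hpos
  · obtain ⟨u, y⟩ := z
    simp only at hz1 hz0 hzd
    subst hz1
    rw [cost_one]
    have hmin := (concaveOn_profit (w := w) hconv q).ge_on_segment
      ⟨hz0, hzd.trans (hdm.le.trans hm)⟩ ⟨hz0.trans (hzd.trans hdm.le), hm⟩
      (Icc_subset_segment ⟨hzd, hdm.le⟩)
    rcases min_le_iff.1 hmin with h | h <;> linarith

lemma IsMaxProfit.eventually_mul_lt_sub {S : Set (ℝ × ℝ)} {T : ℝ → ℝ}
    (hT : IsMaxProfit S (Cost w c) T) (hS : S ⊆ Gen xm) (hconv : ConvexOn ℝ (Icc 0 xm) c)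
    (hc0 : c 0 = 0) {m p : ℝ} (hmS : ((1 : ℝ), m) ∈ S) (hdm : d < m)
    (hpos : 0 < p * m - (w + c m)) (hdm' : p * d - (w + c d) < p * m - (w + c m)) :
    ∀ᶠ δ in 𝓝[>] 0, δ * d < T p - T (p - δ) := by
  have hm : m ≤ xm := by
    rcases mem_gen_iff.1 (hS hmS) with h | h
    · simp at h
    · exact h.2.2
  have hev : ∀ᶠ δ in 𝓝 (0 : ℝ), 0 < (p - δ) * m - (w + c m) ∧
      (p - δ) * d - (w + c d) < (p - δ) * m - (w + c m) :=
    (ContinuousAt.eventually_lt (f := fun _ => 0) (by fun_prop) (by fun_prop)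
      (by simpa using hpos)).and
    (ContinuousAt.eventually_lt (by fun_prop) (by fun_prop) (by simpa using hdm'))
  filter_upwards [nhdsWithin_le_nhds hev, self_mem_nhdsWithin] with δ ⟨hpos', hdm''⟩ hδ
  exact hT.mul_lt_sub_of_forall_lt hmS
    (fun z hz hzd => profit_lt_of_snd_le hconv hc0 hdm hm hpos' hdm'' (hS hz) hzd) hδ


lemma exists_output_gt_of_lt (hd : 0 < d) (hxm : 0 ≤ xm) (hε : 0 < ε) (hc0 : c 0 = 0)
    (hπ : IsMaxProfit (Gen xm) (Cost w c) π)
    (hπh : IsMaxProfit (Ghat xm (min d xm) ε) (Cost w c) πh) {p : ℝ} (hlt : πh p < π p) :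
    d < xm ∧ ∃ x, d + ε < x ∧ x ≤ xm ∧ π p = p * x - (w + c x) := by
  have h0 : 0 ≤ πh p :=
    hπh.nonneg hc0 ⟨mem_gen_iff.2 (Or.inl rfl), by positivity⟩ p
  obtain ⟨⟨u, x⟩, hz, hzπ⟩ := hπ.exists_eq p
  obtain ⟨rfl, hxI⟩ : u = 1 ∧ x ∈ Icc 0 xm := by
    rcases mem_gen_iff.1 hz with h | h
    · rw [h, cost_zero hc0] at hzπ
      linarith
    · exact h
  have hx : min d xm + ε < x := by
    by_contra! h
    linarith [hπh.le ⟨hz, h⟩ p]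
  have hdxm : d < xm := by
    by_contra! h
    rw [min_eq_right h] at hx
    linarith [hxI.2]
  rw [min_eq_left hdxm.le] at hx
  exact ⟨hdxm, x, hx, hxI.2, by rw [← hzπ, cost_one]⟩

theorem eventually_profit_drop_of_not_isLargeNaturalMonopoly {dc : ℝ → ℝ} (hd : 0 < d)
    (hxm : 0 ≤ xm) (hε : 0 < ε) (hconv : ConvexOn ℝ (Icc 0 xm) c) (hc0 : c 0 = 0)
    (hdc : ∀ y ∈ Ico 0 xm, HasDerivWithinAt c (dc y) (Icc y xm) y)
    (hnot : ¬ IsLargeNaturalMonopoly d w xm c dc)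
    (hπ : IsMaxProfit (Gen xm) (Cost w c) π)
    (hπh : IsMaxProfit (Ghat xm (min d xm) ε) (Cost w c) πh) {p : ℝ} (hlt : πh p < π p) :
    ∀ᶠ δ in 𝓝[>] 0, δ * d < π p - π (p - δ) ∧ δ * d < πh p - πh (p - δ) := by
  obtain ⟨hdxm, x, hx, hxm, hπx⟩ := exists_output_gt_of_lt hd hxm hε hc0 hπ hπh hlt
  have hmin : min d xm = d := min_eq_left hdxm.le
  obtain ⟨y₀, hy₀, hy₀d, hy₀dc⟩ : ∃ y, 0 < y ∧ y ≤ d ∧ (w + c y) / y ≤ dc y := by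
    simpa [IsLargeNaturalMonopoly, hdxm] using hnot
  have hconc := concaveOn_profit (w := w) hconv p
  have hπh0 : 0 ≤ πh p :=
    hπh.nonneg hc0 ⟨mem_gen_iff.2 (Or.inl rfl), by rw [hmin]; positivity⟩ p
  have hky₀ : 0 < p * y₀ - (w + c y₀) := by
    by_contra! h
    have hpdc : p ≤ dc y₀ := ((le_div_iff₀ hy₀).2 (by linarith)).trans hy₀dc
    linarith [profit_le_of_le_hasDerivWithinAt (w := w) hconv hy₀.le (by linarith) hxm
      (hdc y₀ ⟨hy₀.le, by linarith⟩) hpdc]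
  have hkd : 0 < p * d - (w + c d) :=
    (lt_min hky₀ (by linarith)).trans_le (hconc.ge_on_segment ⟨hy₀.le, by linarith⟩
      ⟨by linarith, hxm⟩ (Icc_subset_segment ⟨hy₀d, by linarith⟩))
  have hkdx : p * d - (w + c d) < p * x - (w + c x) := by
    have hd_mem : ((1 : ℝ), d) ∈ Ghat xm (min d xm) ε :=
      ⟨mem_gen_iff.2 (Or.inr ⟨rfl, hd.le, hdxm.le⟩), by simp [hmin, hε.le]⟩
    linarith [cost_one (w := w) (c := c) d ▸ hπh.le hd_mem p]
  have hkdε : p * d - (w + c d) < p * (d + ε) - (w + c (d + ε)) := by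
    by_cases h : p * (d + ε) - (w + c (d + ε)) < p * x - (w + c x)
    · exact hconc.lt_right_of_left_lt (x := x) ⟨by linarith, hxm⟩ ⟨hd.le, hdxm.le⟩
        (by rw [openSegment_symm, openSegment_eq_Ioo (by linarith)]; constructor <;> linarith) h
    · linarith
  have hdε : ((1 : ℝ), d + ε) ∈ Ghat xm (min d xm) ε :=
    ⟨mem_gen_iff.2 (Or.inr ⟨rfl, by positivity, by linarith⟩), by simp [hmin]⟩
  exact (hπ.eventually_mul_lt_sub le_rfl hconv hc0
      (mem_gen_iff.2 (Or.inr ⟨rfl, by linarith, hxm⟩)) (by linarith) (by linarith) hkdx).and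
    (hπh.eventually_mul_lt_sub (fun _ h => h.1) hconv hc0 hdε (by linarith) (by linarith) hkdε)

end Generator

section Descent

variable {f g : ℝ → ℝ}

/-- At the leftmost point where `g` reaches `g q`, no descent is possible, so `f = g` there. -/
lemma exists_le_of_descent (hg : Continuous g)
    (hbdd : ∀ a, BddBelow {t | a ≤ g t}) (hdesc : ∀ p, f p < g p → ∃ q < p, g p < g q)
    (q : ℝ) : ∃ t, g q ≤ f t := by
  set A := {t | t ≤ q ∧ g q ≤ g t}
  have hA : IsClosed A :=
    (isClosed_le continuous_id continuous_const).inter (isClosed_le continuous_const hg)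
  have hAbdd : BddBelow A := (hbdd (g q)).mono fun _ ht => ht.2
  have ht₀ : sInf A ∈ A := hA.csInf_mem ⟨q, le_rfl, le_rfl⟩ hAbdd
  refine ⟨sInf A, ht₀.2.trans (not_lt.1 fun hlt => ?_)⟩
  obtain ⟨t, ht, hgt⟩ := hdesc _ hlt
  exact ht.not_ge (csInf_le hAbdd ⟨ht.le.trans ht₀.1, ht₀.2.trans hgt.le⟩)

lemma eq_of_forall_le_of_descent (hfg : ∀ p, f p ≤ g p)
    (hdesc : ∀ p, f p < g p → ∃ q, g p < g q) {p : ℝ} (hp : ∀ q, g q ≤ g p) : f p = g p :=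
  (hfg p).antisymm <| not_lt.1 fun hlt =>
    let ⟨q, hq⟩ := hdesc p hlt
    (hp q).not_gt hq

lemma setOf_forall_le_eq_of_descent (hfg : ∀ p, f p ≤ g p) (hg : Continuous g)
    (hbdd : ∀ a, BddBelow {t | a ≤ g t})
    (hdesc : ∀ p, f p < g p → ∃ q < p, f p < f q ∧ g p < g q) :
    {p | ∀ q, f q ≤ f p} = {p | ∀ q, g q ≤ g p} := by
  ext p
  constructor
  · intro hp q
    have hfp : f p = g p := (hfg p).antisymm <| not_lt.1 fun hlt =>
      let ⟨r, _, hr, _⟩ := hdesc p hlt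
      (hp r).not_gt hr
    obtain ⟨t, ht⟩ := exists_le_of_descent hg hbdd
      (fun p h => (hdesc p h).imp fun _ h => ⟨h.1, h.2.2⟩) q
    exact ht.trans ((hp t).trans hfp.le)
  · intro hp q
    rw [eq_of_forall_le_of_descent hfg (fun p h => (hdesc p h).imp fun _ h => h.2.2) hp]
    exact (hfg q).trans (hp q)

lemma eq_of_isLUB_of_descent (hfg : ∀ p, f p ≤ g p) (hg : Continuous g)
    (hbdd : ∀ a, BddBelow {t | a ≤ g t}) (hdesc : ∀ p, f p < g p → ∃ q < p, g p < g q)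
    {a b : ℝ} (ha : IsLUB (range f) a) (hb : IsLUB (range g) b) : a = b := by
  refine le_antisymm (ha.2 ?_) (hb.2 ?_) <;> rintro _ ⟨q, rfl⟩
  · exact (hfg q).trans (hb.1 ⟨q, rfl⟩)
  · obtain ⟨t, ht⟩ := exists_le_of_descent hg hbdd hdesc q
    exact ht.trans (ha.1 ⟨t, rfl⟩)

end Descent

lemma bddBelow_setOf_le_mul_sub_sum {ι : Type*} [Fintype ι] {T : ℝ → ι → ℝ}
    (hT : ∀ t i, 0 ≤ T t i) {d : ℝ} (hd : 0 < d) (a : ℝ) :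
    BddBelow {t | a ≤ t * d - ∑ i, T t i} :=
  ⟨a / d, fun t (ht : a ≤ t * d - ∑ i, T t i) => (div_le_iff₀ hd).2 <| by
    linarith [Finset.sum_nonneg fun i (_ : i ∈ Finset.univ) => hT t i]⟩

lemma Finset.sub_le_sum_sub_sum_of_monotone {ι : Type*} {s : Finset ι} {φ : ι → ℝ → ℝ}
    (hφ : ∀ i, Monotone (φ i)) {q p : ℝ} (hqp : q ≤ p) {i : ι} (hi : i ∈ s) :
    φ i p - φ i q ≤ ∑ j ∈ s, φ j p - ∑ j ∈ s, φ j q := by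
  rw [← Finset.sum_sub_distrib]
  exact Finset.single_le_sum (fun j _ => sub_nonneg.2 (hφ j hqp)) hi

lemma exists_lt_and_lt_of_eventually_drop {ι : Type*} [Fintype ι] [DecidableEq ι]
    {I : Finset ι} {π πh : ℝ → ι → ℝ} (hπ : ∀ i, Monotone (π · i))
    (hπh : ∀ i, Monotone (πh · i)) {d p : ℝ} {i : ι} (hi : i ∈ Iᶜ)
    (hdrop : ∀ᶠ δ in 𝓝[>] 0, δ * d < π p i - π (p - δ) i ∧ δ * d < πh p i - πh (p - δ) i) :
    ∃ q < p, p * d - ∑ j ∈ Iᶜ, π p j - ∑ j ∈ I, πh p j < q * d - ∑ j ∈ Iᶜ, π q j - ∑ j ∈ I, πh q j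
      ∧ p * d - ∑ j, πh p j < q * d - ∑ j, πh q j := by
  obtain ⟨δ, ⟨hdropπ, hdropπh⟩, hδ⟩ := (hdrop.and self_mem_nhdsWithin).exists
  have hδp : p - δ ≤ p := by linarith
  refine ⟨p - δ, by linarith, ?_, ?_⟩
  · linarith [Finset.sub_le_sum_sub_sum_of_monotone hπ hδp hi,
      Finset.sum_le_sum fun j (_ : j ∈ I) => hπh j hδp]
  · linarith [Finset.sub_le_sum_sub_sum_of_monotone hπh hδp (Finset.mem_univ i)]

theorem stmt_4_general (n : ℕ) (d : ℝ) (hd : 0 < d)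
    (w xmax : Fin n → ℝ) (c : Fin n → ℝ → ℝ)
    (hxmax : ∀ i, 0 < xmax i)
    (hconv : ∀ i, ConvexOn ℝ (Set.Icc 0 (xmax i)) (c i))
    (hc0 : ∀ i, c i 0 = 0)
    (dp : Fin n → ℝ → ℝ)
    (hdp : ∀ i, ∀ y ∈ Set.Ico (0 : ℝ) (xmax i),
      HasDerivWithinAt (c i) (dp i y) (Set.Icc y (xmax i)) y)
    (Ihat : Finset (Fin n))
    (hIhat : ∀ i, i ∈ Ihat ↔
      (d < xmax i ∧ ∀ y ∈ Set.Ioc (0 : ℝ) d, dp i y < (w i + c i y) / y))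
    (ε : Fin n → ℝ) (hε : ∀ i, 0 < ε i)
    (π πh : ℝ → Fin n → ℝ)
    (hπ : ∀ p i, IsGreatest ((fun ux => p * ux.2 - Cost (w i) (c i) ux) ''
        Gen (xmax i)) (π p i))
    (hπh : ∀ p i, IsGreatest ((fun ux => p * ux.2 - Cost (w i) (c i) ux) ''
        Ghat (xmax i) (xcmax n xmax d i) (ε i)) (πh p i))
    (vDbar vDh : ℝ)
    (hvDbar : IsLUB (Set.range fun p =>
        p * d - ∑ i ∈ Ihatᶜ, π p i - ∑ i ∈ Ihat, πh p i) vDbar)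
    (hvDh : IsLUB (Set.range fun p => p * d - ∑ i, πh p i) vDh) :
    {p : ℝ | ∀ q, q * d - ∑ i ∈ Ihatᶜ, π q i - ∑ i ∈ Ihat, πh q i
        ≤ p * d - ∑ i ∈ Ihatᶜ, π p i - ∑ i ∈ Ihat, πh p i}
      = {p : ℝ | ∀ q, q * d - ∑ i, πh q i ≤ p * d - ∑ i, πh p i}
    ∧ (∀ p ∈ {p : ℝ | ∀ q, q * d - ∑ i, πh q i ≤ p * d - ∑ i, πh p i},
        ∀ i ∈ Ihatᶜ, π p i = πh p i)
    ∧ vDbar = vDh := by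
  set f := fun p => p * d - ∑ i ∈ Ihatᶜ, π p i - ∑ i ∈ Ihat, πh p i
  set g := fun p => p * d - ∑ i, πh p i
  have hπ' i : IsMaxProfit (Gen (xmax i)) (Cost (w i) (c i)) (π · i) := (hπ · i)
  have hπh' i :
      IsMaxProfit (Ghat (xmax i) (min d (xmax i)) (ε i)) (Cost (w i) (c i)) (πh · i) := (hπh · i)
  have hle p i : πh p i ≤ π p i := (hπh' i).le_of_subset (hπ' i) (fun _ h => h.1) p
  have hgap p : g p - f p = ∑ i ∈ Ihatᶜ, (π p i - πh p i) := by
    simp only [f, g, Finset.sum_sub_distrib, ← Finset.sum_compl_add_sum Ihat (πh p ·)]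
    ring
  have hfg p : f p ≤ g p := by
    linarith [hgap p, Finset.sum_nonneg fun i (_ : i ∈ Ihatᶜ) => sub_nonneg.2 (hle p i)]
  have hπ_mono i : Monotone (π · i) := (hπ' i).monotone fun _ h => h.2.1
  have hπh_mono i : Monotone (πh · i) := (hπh' i).monotone fun _ h => h.1.2.1
  have hdesc p (hlt : f p < g p) : ∃ q < p, f p < f q ∧ g p < g q := by
    obtain ⟨i, hi, hπi⟩ : ∃ i ∈ Ihatᶜ, πh p i < π p i := by
      by_contra! h
      linarith [hgap p, Finset.sum_nonpos fun i hi => sub_nonpos.2 (h i hi)]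
    have hnot : ¬ IsLargeNaturalMonopoly d (w i) (xmax i) (c i) (dp i) :=
      fun h => Finset.mem_compl.1 hi ((hIhat i).2 h)
    exact exists_lt_and_lt_of_eventually_drop hπ_mono hπh_mono hi <|
      eventually_profit_drop_of_not_isLargeNaturalMonopoly hd (hxmax i).le (hε i) (hconv i)
        (hc0 i) (hdp i) hnot (hπ' i) (hπh' i) hπi
  have hπh_cont i : Continuous (πh · i) :=
    ((hπh' i).lipschitzWith fun _ h => abs_le_of_mem_gen (hxmax i).le h.1).continuous
  have hg : Continuous g := by fun_prop
  have hbdd := bddBelow_setOf_le_mul_sub_sum (fun t i => (hπh' i).nonneg (hc0 i)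
    ⟨mem_gen_iff.2 (Or.inl rfl), add_nonneg (le_min hd.le (hxmax i).le) (hε i).le⟩ t) hd
  have hdesc_g p (hlt : f p < g p) : ∃ q < p, g p < g q :=
    (hdesc p hlt).imp fun _ h => ⟨h.1, h.2.2⟩
  refine ⟨setOf_forall_le_eq_of_descent hfg hg hbdd hdesc, fun p hp i hi => ?_,
    eq_of_isLUB_of_descent hfg hg hbdd hdesc_g hvDbar hvDh⟩
  have hfp := eq_of_forall_le_of_descent hfg (fun p h => (hdesc_g p h).imp fun _ => And.right) hp
  exact sub_eq_zero.1 <| (Finset.sum_eq_zero_iff_of_nonneg fun i _ => sub_nonneg.2 (hle p i)).1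
    (by linarith [hgap p]) i hi

/-- Proposition 5: the truncation `x ≤ x^c,max + ε` can be dropped in the dual problem for
every non-LNMGU generator: (a) `P̄⁺(ε) = P̂⁺(ε)`; (b) `π_i(p) = π̂_i(p,ε_i)` for `p ∈ P̂⁺(ε)`
and `i ∈ Ī`; (c) `v̄^D(ε) = v̂^D(ε)`.  Here `Î` (the LNMGUs) consists of the generators with
`xmax i > d` and `(w_i + c_i y)/y > ∂₊c_i(y)` on `(0, d]`, and `Ī` is its complement. -/
theorem stmt_4 (n : ℕ) (d : ℝ) (hd : 0 < d)
    (w xmax : Fin n → ℝ) (c : Fin n → ℝ → ℝ)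
    (hxmax : ∀ i, 0 < xmax i) (hw : ∀ i, 0 ≤ w i)
    (hconv : ∀ i, ConvexOn ℝ (Set.Icc 0 (xmax i)) (c i))
    (hmono : ∀ i, MonotoneOn (c i) (Set.Icc 0 (xmax i)))
    (hcont : ∀ i, ContinuousOn (c i) (Set.Icc 0 (xmax i)))
    (hc0 : ∀ i, c i 0 = 0)
    (hfeas : d ≤ ∑ i, xmax i)
    (dp : Fin n → ℝ → ℝ)
    (hdp : ∀ i, ∀ y ∈ Set.Ico (0 : ℝ) (xmax i),
      HasDerivWithinAt (c i) (dp i y) (Set.Icc y (xmax i)) y)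
    (Ihat : Finset (Fin n))
    (hIhat : ∀ i, i ∈ Ihat ↔
      (d < xmax i ∧ ∀ y ∈ Set.Ioc (0 : ℝ) d, dp i y < (w i + c i y) / y))
    (ε : Fin n → ℝ) (hε : ∀ i, 0 < ε i)
    (π πh : ℝ → Fin n → ℝ)
    (hπ : ∀ p i, IsGreatest ((fun ux => p * ux.2 - Cost (w i) (c i) ux) ''
        Gen (xmax i)) (π p i))
    (hπh : ∀ p i, IsGreatest ((fun ux => p * ux.2 - Cost (w i) (c i) ux) ''
        Ghat (xmax i) (xcmax n xmax d i) (ε i)) (πh p i))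
    (vDbar vDh : ℝ)
    (hvDbar : IsLUB (Set.range fun p =>
        p * d - ∑ i ∈ Ihatᶜ, π p i - ∑ i ∈ Ihat, πh p i) vDbar)
    (hvDh : IsLUB (Set.range fun p => p * d - ∑ i, πh p i) vDh) :
    {p : ℝ | ∀ q, q * d - ∑ i ∈ Ihatᶜ, π q i - ∑ i ∈ Ihat, πh q i
        ≤ p * d - ∑ i ∈ Ihatᶜ, π p i - ∑ i ∈ Ihat, πh p i}
      = {p : ℝ | ∀ q, q * d - ∑ i, πh q i ≤ p * d - ∑ i, πh p i}
    ∧ (∀ p ∈ {p : ℝ | ∀ q, q * d - ∑ i, πh q i ≤ p * d - ∑ i, πh p i},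
        ∀ i ∈ Ihatᶜ, π p i = πh p i)
    ∧ vDbar = vDh :=
  stmt_4_general n d hd w xmax c hxmax hconv hc0 dp hdp Ihat hIhat ε hε π πh hπ hπh vDbar vDh hvDbar
    hvDh
end
end

section
/- Let M = {i : x_i^max > d and (w_i + c_i(d))/d > ∂₊c_i(d)}. Then every minimizer ((u_i*, x_i*))_i of the primal problem (minimize Σ_i C_i(u_i,x_i) over Ω) has at most one index i ∈ M with u_i* = 1. That is, at most one large natural monopoly generating unit is committed in any centralized dispatch solution. -/
noncomputable section

open Topology

/-- Secant slope of a convex function below `d` is bounded by the right derivative at `d`. -/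
lemma slope_le_dp {xm D dd : ℝ} {c : ℝ → ℝ} (hconv : ConvexOn ℝ (Set.Icc 0 xm) c)
    (hd0 : 0 ≤ dd) (hdxm : dd < xm)
    (hD : HasDerivWithinAt c D (Set.Icc dd xm) dd)
    {a b : ℝ} (ha : 0 ≤ a) (hab : a ≤ b) (hbd : b ≤ dd) :
    c b - c a ≤ D * (b - a) := by
  rcases eq_or_lt_of_le hab with rfl | hab
  · simp
  have hbpos : 0 < b - a := by linarith
  have hkey : ∀ t ∈ Set.Ioc dd xm, (c b - c a) / (b - a) ≤ slope c dd t := by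
    intro t ht
    have hat : a < t := by linarith [ht.1]
    have hma : a ∈ Set.Icc 0 xm := ⟨ha, by linarith [ht.2]⟩
    have hmb : b ∈ Set.Icc 0 xm := ⟨by linarith, by linarith [ht.1, ht.2]⟩
    have hmt : t ∈ Set.Icc 0 xm := ⟨by linarith [ht.1], ht.2⟩
    have h1 : (c b - c a) / (b - a) ≤ (c t - c a) / (t - a) :=
      hconv.secant_mono hma hmb hmt (ne_of_gt hab) (ne_of_gt hat) (by linarith [ht.1])
    have h2 : (c t - c a) / (t - a) ≤ (c t - c dd) / (t - dd) :=
      hconv.secant_mono_aux3 hma hmt (by linarith) ht.1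
    rw [slope_def_field]
    linarith
  have hne : (𝓝[Set.Ioc dd xm] dd).NeBot := by
    rw [nhdsWithin_Ioc_eq_nhdsGT hdxm]
    exact nhdsGT_neBot_of_exists_gt ⟨xm, hdxm⟩
  have htend : Filter.Tendsto (slope c dd) (𝓝[Set.Ioc dd xm] dd) (𝓝 D) := by
    have h := hasDerivWithinAt_iff_tendsto_slope.mp hD
    rwa [Set.Icc_diff_left] at h
  have hle : (c b - c a) / (b - a) ≤ D :=
    ge_of_tendsto htend (eventually_mem_nhdsWithin.mono fun t ht => hkey t ht)
  calc c b - c a = (c b - c a) / (b - a) * (b - a) := by field_simp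
    _ ≤ D * (b - a) := by nlinarith

lemma sum_two {n : ℕ} (f g : Fin n → ℝ) (i j : Fin n) (hij : i ≠ j)
    (h : ∀ k, k ≠ i → k ≠ j → g k = f k) :
    ∑ k, g k = ∑ k, f k - f i - f j + g i + g j := by
  have h2 : ∑ k ∈ ({i, j} : Finset (Fin n)), (g k - f k) = ∑ k, (g k - f k) :=
    Finset.sum_subset (Finset.subset_univ _) (fun k _ hk => by
      simp only [Finset.mem_insert, Finset.mem_singleton, not_or] at hk
      rw [h k hk.1 hk.2]; ring)
  rw [Finset.sum_pair hij] at h2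
  have h3 : ∑ k, (g k - f k) = ∑ k, g k - ∑ k, f k := Finset.sum_sub_distrib _ _
  linarith [h2, h3]

/-- Transfer lemma: if both i and j are ON in a minimizer and i can carry the whole demand,
shutting down j and shifting its output to i cannot decrease cost. -/
lemma transfer {n : ℕ} {d : ℝ} (hd : 0 < d) {w xmax : Fin n → ℝ} {c : Fin n → ℝ → ℝ}
    (hc0 : ∀ i, c i 0 = 0)
    {Xs : Fin n → ℝ × ℝ} (hXs : Xs ∈ Omega n xmax d)
    (hXsmin : ∀ X ∈ Omega n xmax d,
      ∑ i, Cost (w i) (c i) (Xs i) ≤ ∑ i, Cost (w i) (c i) (X i))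
    (i j : Fin n) (hij : i ≠ j) (hdi : d < xmax i)
    (hui : (Xs i).1 = 1) (huj : (Xs j).1 = 1) :
    w j + c j (Xs j).2 ≤ c i ((Xs i).2 + (Xs j).2) - c i (Xs i).2 := by
  obtain ⟨hGen, hsum⟩ := hXs
  have hnn : ∀ k, 0 ≤ (Xs k).2 := fun k => (hGen k).2.1
  have hsumle : (Xs i).2 + (Xs j).2 ≤ d := by
    have h2 : ∑ k ∈ ({i, j} : Finset (Fin n)), (Xs k).2 ≤ ∑ k, (Xs k).2 :=
      Finset.sum_le_sum_of_subset_of_nonneg (Finset.subset_univ _) (fun k _ _ => hnn k)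
    rw [Finset.sum_pair hij] at h2
    linarith [hsum ▸ h2]
  -- the modified schedule
  set Y : Fin n → ℝ × ℝ :=
    fun k => if k = i then (1, (Xs i).2 + (Xs j).2) else if k = j then (0, 0) else Xs k with hY
  have hYi : Y i = (1, (Xs i).2 + (Xs j).2) := by simp [hY]
  have hYj : Y j = (0, 0) := by simp [hY, hij.symm]
  have hYk : ∀ k, k ≠ i → k ≠ j → Y k = Xs k := by
    intro k h1 h2; simp [hY, h1, h2]
  have hYfeas : Y ∈ Omega n xmax d := by
    constructor
    · intro k
      by_cases h1 : k = i
      · rw [h1, hYi]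
        refine ⟨Or.inr rfl, ?_, ?_⟩
        · show (0:ℝ) ≤ (Xs i).2 + (Xs j).2
          linarith [hnn i, hnn j]
        · show (Xs i).2 + (Xs j).2 ≤ 1 * xmax i
          linarith
      by_cases h2 : k = j
      · rw [h2, hYj]
        refine ⟨Or.inl rfl, le_refl 0, ?_⟩
        show (0:ℝ) ≤ 0 * xmax j
        simp
      · rw [hYk k h1 h2]; exact hGen k
    · have h := sum_two (fun k => (Xs k).2) (fun k => (Y k).2) i j hij
        (fun k h1 h2 => by simp only [hYk k h1 h2])
      simp only [hYi, hYj] at h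
      rw [h, hsum]; ring
  have hmin := hXsmin Y hYfeas
  have hcs := sum_two (fun k => Cost (w k) (c k) (Xs k)) (fun k => Cost (w k) (c k) (Y k)) i j hij
    (fun k h1 h2 => by simp only [hYk k h1 h2])
  rw [hcs] at hmin
  simp only [hYi, hYj, Cost, hui, huj, hc0 j] at hmin
  linarith [hmin]

/-- Proposition 6: any minimizer of the primal problem commits at most one generator
from `M = {i : xmax i > d ∧ (w_i + c_i d)/d > ∂₊c_i(d)}`, i.e. at most one large natural
monopoly generating unit is "ON" in any centralized dispatch solution. -/
theorem stmt_5 (n : ℕ) (d : ℝ) (hd : 0 < d)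
    (w xmax : Fin n → ℝ) (c : Fin n → ℝ → ℝ)
    (hxmax : ∀ i, 0 < xmax i) (hw : ∀ i, 0 ≤ w i)
    (hconv : ∀ i, ConvexOn ℝ (Set.Icc 0 (xmax i)) (c i))
    (hmono : ∀ i, MonotoneOn (c i) (Set.Icc 0 (xmax i)))
    (hcont : ∀ i, ContinuousOn (c i) (Set.Icc 0 (xmax i)))
    (hc0 : ∀ i, c i 0 = 0)
    (hfeas : d ≤ ∑ i, xmax i)
    (dp : Fin n → ℝ → ℝ)
    (hdp : ∀ i, d < xmax i →
      HasDerivWithinAt (c i) (dp i d) (Set.Icc d (xmax i)) d)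
    (Xs : Fin n → ℝ × ℝ) (hXs : Xs ∈ Omega n xmax d)
    (hXsmin : ∀ X ∈ Omega n xmax d,
      ∑ i, Cost (w i) (c i) (Xs i) ≤ ∑ i, Cost (w i) (c i) (X i)) :
    Set.Subsingleton
      {i : Fin n | (d < xmax i ∧ dp i d < (w i + c i d) / d) ∧ (Xs i).1 = 1} := by
  intro i hi j hj
  by_contra hij
  simp only [Set.mem_setOf_eq] at hi hj
  obtain ⟨⟨hdi, hmi⟩, hui⟩ := hi
  obtain ⟨⟨hdj, hmj⟩, huj⟩ := hj
  obtain ⟨hGen, hsum⟩ := hXs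
  have hnn : ∀ k, 0 ≤ (Xs k).2 := fun k => (hGen k).2.1
  have hsumle : (Xs i).2 + (Xs j).2 ≤ d := by
    have h2 : ∑ k ∈ ({i, j} : Finset (Fin n)), (Xs k).2 ≤ ∑ k, (Xs k).2 :=
      Finset.sum_le_sum_of_subset_of_nonneg (Finset.subset_univ _) (fun k _ _ => hnn k)
    rw [Finset.sum_pair hij] at h2
    linarith [hsum ▸ h2]
  have hA := transfer hd hc0 ⟨hGen, hsum⟩ hXsmin i j hij hdi hui huj
  have hB := transfer hd hc0 ⟨hGen, hsum⟩ hXsmin j i (Ne.symm hij) hdj huj hui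
  -- slope bounds
  have hAi : c i ((Xs i).2 + (Xs j).2) - c i (Xs i).2 ≤ dp i d * (Xs j).2 := by
    have h := slope_le_dp (hconv i) hd.le hdi (hdp i hdi) (hnn i)
      (le_add_of_nonneg_right (hnn j)) hsumle
    simpa using h
  have hBj : c j ((Xs j).2 + (Xs i).2) - c j (Xs j).2 ≤ dp j d * (Xs i).2 := by
    have h := slope_le_dp (hconv j) hd.le hdj (hdp j hdj) (hnn j)
      (le_add_of_nonneg_right (hnn i)) (by linarith : (Xs j).2 + (Xs i).2 ≤ d)
    simpa using h
  -- monopoly facts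
  have hmoni : dp i d * (Xs i).2 < w i + c i (Xs i).2 := by
    have h1 : dp i d * d < w i + c i d := by
      have h := (lt_div_iff₀ hd).mp hmi; linarith [h]
    have h2 : c i d - c i (Xs i).2 ≤ dp i d * (d - (Xs i).2) :=
      slope_le_dp (hconv i) hd.le hdi (hdp i hdi) (hnn i) (by linarith [hnn j]) le_rfl
    nlinarith [h1, h2]
  have hmonj : dp j d * (Xs j).2 < w j + c j (Xs j).2 := by
    have h1 : dp j d * d < w j + c j d := by
      have h := (lt_div_iff₀ hd).mp hmj; linarith [h]
    have h2 : c j d - c j (Xs j).2 ≤ dp j d * (d - (Xs j).2) :=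
      slope_le_dp (hconv j) hd.le hdj (hdp j hdj) (hnn j) (by linarith [hnn i]) le_rfl
    nlinarith [h1, h2]
  -- combine
  have hAi' : dp j d * (Xs j).2 < dp i d * (Xs j).2 := by linarith
  have hBj' : dp i d * (Xs i).2 < dp j d * (Xs i).2 := by linarith
  have hxjpos : 0 < (Xs j).2 := by
    rcases (hnn j).lt_or_eq with h | h
    · exact h
    · exfalso; rw [← h] at hAi'; simp at hAi'
  have hxipos : 0 < (Xs i).2 := by
    rcases (hnn i).lt_or_eq with h | h
    · exact h
    · exfalso; rw [← h] at hBj'; simp at hBj'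
  have h1 : dp j d < dp i d := lt_of_mul_lt_mul_right hAi' hxjpos.le
  have h2 : dp i d < dp j d := lt_of_mul_lt_mul_right hBj' hxipos.le
  linarith
end
end

section
/- Assume Î ≠ ∅ and that for every i ∈ Î the number ε_i > 0 is small enough that d + ε_i ≤ x_i^max and (w_i + c_i(y))/y > ∂₊c_i(y) for all y ∈ (0, d + ε_i]. Let Î_min(ε) = {i ∈ Î : (w_i + c_i(d+ε_i))/(d+ε_i) = min_{j ∈ Î} (w_j + c_j(d+ε_j))/(d+ε_j)}. Then for any subset S ⊆ Î such that Î \ S contains at least one element of Î_min(ε), the set of maximizers of p ↦ p·d − Σ_{i ∈ Ī} π_i(p) − Σ_{i ∈ Î \ S} π̂_i(p,ε_i) equals P̄⁺(ε); i.e., removing any group of LNMGUs from the dual problem, provided at least one LNMGU from Î_min(ε) remains, does not change the set of market prices. -/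
/-
Let `ρ` be the least average cost `(w_i + c_i (d + ε_i)) / (d + ε_i)` over `Î`, attained at a unit
`i₀ ∉ S`. On `(0, d + ε_i]` the average cost of an LNMGU exceeds its marginal cost, so it is
decreasing there; hence at a price `p ≤ ρ` no LNMGU earns a positive profit on `Ĝ_i(ε_i)`, all
`π̂_i(p, ε_i)` vanish, and the two dual objectives agree on `(-∞, ρ]`. For `p > ρ`, producing
`d + ε_{i₀}` with unit `i₀` alone earns `(p - ρ)(d + ε_{i₀})`, while the other profits are
nondecreasing in `p`, so each objective is at most its value at `ρ` minus `(p - ρ) ε_{i₀}`. Both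
maximizer sets therefore lie in `(-∞, ρ]`, where the objectives coincide.
-/

noncomputable section

open Set

lemma IsMaxOn.hasDerivWithinAt_Icc_nonpos {f : ℝ → ℝ} {f' a b : ℝ} (hab : a < b)
    (hmax : IsMaxOn f (Icc a b) a) (hf : HasDerivWithinAt f f' (Icc a b) a) : f' ≤ 0 := by
  have hcone : b - a ∈ posTangentConeAt (Icc a b) a :=
    sub_mem_posTangentConeAt_of_segment_subset (segment_eq_Icc hab.le ▸ Subset.rfl)
  have h := hmax.localize.hasFDerivWithinAt_nonpos hf.hasFDerivWithinAt hcone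
  simp only [ContinuousLinearMap.toSpanSingleton_apply, smul_eq_mul] at h
  exact nonpos_of_mul_nonpos_left (by linarith) (sub_pos.2 hab)

/-- A maximizer of `f` on `[x, D]` with `0 < f` lies in `[x, D)`, where Fermat's rule forbids a
positive right derivative. -/
lemma nonpos_of_hasDerivWithinAt_pos_of_pos {f f' : ℝ → ℝ} {x D : ℝ} (hxD : x ≤ D)
    (hf : ContinuousOn f (Icc x D)) (hD : f D ≤ 0)
    (hderiv : ∀ a ∈ Ico x D, HasDerivWithinAt f (f' a) (Icc a D) a)
    (hpos : ∀ a ∈ Ico x D, 0 < f a → 0 < f' a) : f x ≤ 0 := by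
  by_contra! hfx
  obtain ⟨a, ha, hmax⟩ := isCompact_Icc.exists_isMaxOn (nonempty_Icc.2 hxD) hf
  have hfa : 0 < f a := hfx.trans_le (hmax (left_mem_Icc.2 hxD))
  have haD : a < D := ha.2.lt_of_ne (by rintro rfl; linarith)
  have hmax' : IsMaxOn f (Icc a D) a := hmax.on_subset (Icc_subset_Icc_left ha.1)
  exact (hpos a ⟨ha.1, haD⟩ hfa).not_ge
    (hmax'.hasDerivWithinAt_Icc_nonpos haD (hderiv a ⟨ha.1, haD⟩))

lemma avgCost_le_of_deriv_lt_avgCost {c dp : ℝ → ℝ} {w x D : ℝ} (hx : 0 < x) (hxD : x ≤ D)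
    (hcont : ContinuousOn c (Icc x D))
    (hdp : ∀ y ∈ Ico x D, HasDerivWithinAt c (dp y) (Icc y D) y)
    (havg : ∀ y ∈ Ico x D, dp y < (w + c y) / y) :
    (w + c D) / D ≤ (w + c x) / x := by
  set p := (w + c D) / D
  have hpD : p * D = w + c D := div_mul_cancel₀ _ (hx.trans_le hxD).ne'
  suffices p * x - (w + c x) ≤ 0 by rw [le_div_iff₀ hx]; linarith
  refine nonpos_of_hasDerivWithinAt_pos_of_pos (f := fun y => p * y - (w + c y))
    (f' := fun y => p - dp y) hxD (by fun_prop) (by simp only [hpD, sub_self, le_refl])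
    (fun a ha => ?_) (fun a ha hfa => ?_)
  · simpa using ((hasDerivWithinAt_id a _).const_mul p).fun_sub ((hdp a ha).const_add w)
  · have ha0 : 0 < a := hx.trans_le ha.1
    have : (w + c a) / a < p := by rw [div_lt_iff₀ ha0]; linarith
    linarith [havg a ha]

lemma monotone_of_isGreatest_profit {A : Set (ℝ × ℝ)} {C : ℝ × ℝ → ℝ} {v : ℝ → ℝ}
    (hA : ∀ ux ∈ A, 0 ≤ ux.2) (hv : ∀ p, IsGreatest ((fun ux => p * ux.2 - C ux) '' A) (v p)) :
    Monotone v := by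
  intro q r hqr
  obtain ⟨ux, hux, hval⟩ := (hv q).1
  rw [← hval]
  calc q * ux.2 - C ux ≤ r * ux.2 - C ux := by gcongr; exact hA ux hux
    _ ≤ v r := (hv r).2 ⟨ux, hux, rfl⟩

lemma profit_nonpos_of_le_avgCost {c dp : ℝ → ℝ} {w X D p : ℝ} (hw : 0 ≤ w) (hc0 : c 0 = 0)
    (hDX : D ≤ X) (hcont : ContinuousOn c (Icc 0 X))
    (hdp : ∀ y, 0 < y → y < X → HasDerivWithinAt c (dp y) (Icc y X) y)
    (havg : ∀ y ∈ Ioc 0 D, dp y < (w + c y) / y) (hp : p ≤ (w + c D) / D)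
    {ux : ℝ × ℝ} (hux : ux ∈ Gen X) (huxD : ux.2 ≤ D) : p * ux.2 - Cost w c ux ≤ 0 := by
  obtain ⟨u, x⟩ := ux
  obtain ⟨rfl | rfl, hx0, hxX⟩ : (u = 0 ∨ u = 1) ∧ 0 ≤ x ∧ x ≤ u * X := hux
  · obtain rfl : x = 0 := le_antisymm (by simpa using hxX) hx0
    simp [Cost, hc0]
  rcases hx0.eq_or_lt with rfl | hx
  · simp [Cost, hc0, hw]
  have hAC := avgCost_le_of_deriv_lt_avgCost hx huxD
    (hcont.mono (Icc_subset_Icc hx.le hDX))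
    (fun y hy => (hdp y (hx.trans_le hy.1) (hy.2.trans_le hDX)).mono (Icc_subset_Icc_right hDX))
    (fun y hy => havg y ⟨hx.trans_le hy.1, hy.2.le⟩)
  have : p * x ≤ w + c x := (le_div_iff₀ hx).1 (hp.trans hAC)
  simp only [Cost, mul_one]
  linarith

lemma Ghat_xcmax_of_le {n : ℕ} {xmax : Fin n → ℝ} {d e : ℝ} {i : Fin n} (h : d ≤ xmax i) :
    Ghat (xmax i) (xcmax n xmax d i) e = {ux ∈ Gen (xmax i) | ux.2 ≤ d + e} := by
  rw [Ghat, xcmax, min_eq_left h]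

section Profit

variable {c : ℝ → ℝ} {w X D p v : ℝ}

lemma profit_nonneg (hc0 : c 0 = 0) (hD : 0 ≤ D)
    (hv : IsGreatest ((fun ux => p * ux.2 - Cost w c ux) '' {ux ∈ Gen X | ux.2 ≤ D}) v) :
    0 ≤ v := by
  have hmem : ((0 : ℝ), (0 : ℝ)) ∈ {ux ∈ Gen X | ux.2 ≤ D} :=
    ⟨⟨Or.inl rfl, le_rfl, by simp⟩, hD⟩
  simpa [Cost, hc0] using hv.2 ⟨_, hmem, rfl⟩

lemma sub_avgCost_mul_le_profit (hD : 0 < D) (hDX : D ≤ X)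
    (hv : IsGreatest ((fun ux => p * ux.2 - Cost w c ux) '' {ux ∈ Gen X | ux.2 ≤ D}) v) :
    (p - (w + c D) / D) * D ≤ v := by
  have hmem : ((1 : ℝ), D) ∈ {ux ∈ Gen X | ux.2 ≤ D} :=
    ⟨⟨Or.inr rfl, hD.le, by simpa using hDX⟩, le_rfl⟩
  have := hv.2 ⟨_, hmem, rfl⟩
  rw [sub_mul, div_mul_cancel₀ _ hD.ne']
  simpa [Cost] using this

lemma profit_eq_zero_of_le_avgCost {dp : ℝ → ℝ} (hw : 0 ≤ w) (hc0 : c 0 = 0) (hD : 0 ≤ D)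
    (hDX : D ≤ X) (hcont : ContinuousOn c (Icc 0 X))
    (hdp : ∀ y, 0 < y → y < X → HasDerivWithinAt c (dp y) (Icc y X) y)
    (havg : ∀ y ∈ Ioc 0 D, dp y < (w + c y) / y) (hp : p ≤ (w + c D) / D)
    (hv : IsGreatest ((fun ux => p * ux.2 - Cost w c ux) '' {ux ∈ Gen X | ux.2 ≤ D}) v) :
    v = 0 := by
  obtain ⟨ux, hux, hval⟩ := hv.1
  exact le_antisymm (hval ▸ profit_nonpos_of_le_avgCost hw hc0 hDX hcont hdp havg hp hux.1 hux.2)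
    (profit_nonneg hc0 hD hv)

end Profit

lemma forall_le_of_eqOn_Iic {α β : Type*} [LinearOrder α] [LinearOrder β] {F G : α → β}
    {ρ p : α} (hFG : EqOn F G (Iic ρ)) (hF : ∀ q, ρ < q → F q < F ρ)
    (hG : ∀ q, ρ < q → G q < G ρ) (hp : ∀ q, F q ≤ F p) (q : α) : G q ≤ G p := by
  have hpρ : p ≤ ρ := not_lt.1 fun h => (hF p h).not_ge (hp ρ)
  rw [← hFG hpρ]
  rcases le_or_gt q ρ with hq | hq
  · exact hFG hq ▸ hp q
  · calc G q ≤ G ρ := (hG q hq).le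
      _ = F ρ := (hFG le_rfl).symm
      _ ≤ F p := hp ρ

lemma forall_le_iff_of_eqOn_Iic {α β : Type*} [LinearOrder α] [LinearOrder β] {F G : α → β}
    {ρ : α} (hFG : EqOn F G (Iic ρ)) (hF : ∀ q, ρ < q → F q < F ρ)
    (hG : ∀ q, ρ < q → G q < G ρ) (p : α) : (∀ q, F q ≤ F p) ↔ ∀ q, G q ≤ G p :=
  ⟨forall_le_of_eqOn_Iic hFG hF hG, forall_le_of_eqOn_Iic hFG.symm hG hF⟩

lemma sub_sub_sum_lt_of_lt {ι : Type*} {T : Finset ι} {a : ℝ → ℝ} {v : ℝ → ι → ℝ}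
    {d D ρ q : ℝ} {i₀ : ι} (ha : Monotone a) (hi₀ : i₀ ∈ T) (hv : ∀ i ∈ T, 0 ≤ v q i)
    (hvρ : ∀ i ∈ T, v ρ i = 0) (hv₀ : (q - ρ) * D ≤ v q i₀) (hdD : d < D) (hq : ρ < q) :
    q * d - a q - ∑ i ∈ T, v q i < ρ * d - a ρ - ∑ i ∈ T, v ρ i := by
  rw [Finset.sum_eq_zero hvρ]
  have := Finset.single_le_sum hv hi₀
  have := ha hq.le
  nlinarith [mul_lt_mul_of_pos_left hdD (sub_pos.2 hq)]

theorem stmt_6_general (n : ℕ) (d : ℝ) (hd : 0 < d)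
    (w xmax : Fin n → ℝ) (c : Fin n → ℝ → ℝ)
    (hw : ∀ i, 0 ≤ w i)
    (hcont : ∀ i, ContinuousOn (c i) (Set.Icc 0 (xmax i)))
    (hc0 : ∀ i, c i 0 = 0)
    (dp : Fin n → ℝ → ℝ)
    (hdp : ∀ i, ∀ y, 0 < y → y < xmax i →
      HasDerivWithinAt (c i) (dp i y) (Set.Icc y (xmax i)) y)
    (Ihat : Finset (Fin n))
    (ε : Fin n → ℝ)
    (hεpos : ∀ i ∈ Ihat, 0 < ε i)
    (hεcap : ∀ i ∈ Ihat, d + ε i ≤ xmax i)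
    (hεavg : ∀ i ∈ Ihat, ∀ y ∈ Set.Ioc (0 : ℝ) (d + ε i), dp i y < (w i + c i y) / y)
    (π πh : ℝ → Fin n → ℝ)
    (hπ : ∀ p i, IsGreatest ((fun ux => p * ux.2 - Cost (w i) (c i) ux) ''
        Gen (xmax i)) (π p i))
    (hπh : ∀ p, ∀ i ∈ Ihat, IsGreatest ((fun ux => p * ux.2 - Cost (w i) (c i) ux) ''
        Ghat (xmax i) (xcmax n xmax d i) (ε i)) (πh p i))
    (S : Finset (Fin n))
    (hrem : ∃ i ∈ Ihat \ S, ∀ j ∈ Ihat,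
      (w i + c i (d + ε i)) / (d + ε i) ≤ (w j + c j (d + ε j)) / (d + ε j)) :
    {p : ℝ | ∀ q, q * d - ∑ i ∈ Ihatᶜ, π q i - ∑ i ∈ Ihat \ S, πh q i
        ≤ p * d - ∑ i ∈ Ihatᶜ, π p i - ∑ i ∈ Ihat \ S, πh p i}
      = {p : ℝ | ∀ q, q * d - ∑ i ∈ Ihatᶜ, π q i - ∑ i ∈ Ihat, πh q i
        ≤ p * d - ∑ i ∈ Ihatᶜ, π p i - ∑ i ∈ Ihat, πh p i} := by
  obtain ⟨i₀, hi₀, hmin⟩ := hrem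
  have hi₀I : i₀ ∈ Ihat := (Finset.mem_sdiff.1 hi₀).1
  set ρ := (w i₀ + c i₀ (d + ε i₀)) / (d + ε i₀)
  have hdε : ∀ i ∈ Ihat, d < d + ε i := fun i hi => lt_add_of_pos_right d (hεpos i hi)
  have hv : ∀ q, ∀ i ∈ Ihat, IsGreatest ((fun ux => q * ux.2 - Cost (w i) (c i) ux) ''
      {ux ∈ Gen (xmax i) | ux.2 ≤ d + ε i}) (πh q i) := fun q i hi =>
    Ghat_xcmax_of_le ((hdε i hi).le.trans (hεcap i hi)) ▸ hπh q i hi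
  have hzero : ∀ i ∈ Ihat, ∀ q ≤ ρ, πh q i = 0 := fun i hi q hq =>
    profit_eq_zero_of_le_avgCost (hw i) (hc0 i) (by linarith [hdε i hi]) (hεcap i hi) (hcont i)
      (hdp i) (hεavg i hi) (hq.trans (hmin i hi)) (hv q i hi)
  have hmono : Monotone fun q => ∑ i ∈ Ihatᶜ, π q i := fun q r hqr =>
    Finset.sum_le_sum fun i _ =>
      monotone_of_isGreatest_profit (fun ux hux => hux.2.1) (hπ · i) hqr
  have hdrop : ∀ T ⊆ Ihat, i₀ ∈ T → ∀ q, ρ < q →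
      q * d - ∑ i ∈ Ihatᶜ, π q i - ∑ i ∈ T, πh q i
        < ρ * d - ∑ i ∈ Ihatᶜ, π ρ i - ∑ i ∈ T, πh ρ i := fun T hT hi₀T q hq =>
    sub_sub_sum_lt_of_lt hmono hi₀T
      (fun i hi => profit_nonneg (hc0 i) (by linarith [hdε i (hT hi)]) (hv q i (hT hi)))
      (fun i hi => hzero i (hT hi) ρ le_rfl)
      (sub_avgCost_mul_le_profit (by linarith [hdε i₀ hi₀I]) (hεcap i₀ hi₀I) (hv q i₀ hi₀I))
      (hdε i₀ hi₀I) hq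
  ext p
  refine forall_le_iff_of_eqOn_Iic (fun q hq => ?_) (hdrop _ Finset.sdiff_subset hi₀)
    (hdrop _ subset_rfl hi₀I) p
  rw [Finset.sum_eq_zero fun i hi => hzero i (Finset.mem_sdiff.1 hi).1 q hq,
    Finset.sum_eq_zero fun i hi => hzero i hi q hq]

/-- Proposition 7: if `Î ≠ ∅` and each `ε_i` (for `i ∈ Î`) is small enough that
`d + ε_i ≤ xmax i` and `(w_i + c_i y)/y > ∂₊c_i(y)` on `(0, d + ε_i]`, then removing any
group `S ⊆ Î` of LNMGUs from the dual problem, provided `Î \ S` still contains some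
element of `Î_min(ε)`, does not change the set of dual maximizers `P̄⁺(ε)`. -/
theorem stmt_6 (n : ℕ) (d : ℝ) (hd : 0 < d)
    (w xmax : Fin n → ℝ) (c : Fin n → ℝ → ℝ)
    (hxmax : ∀ i, 0 < xmax i) (hw : ∀ i, 0 ≤ w i)
    (hconv : ∀ i, ConvexOn ℝ (Set.Icc 0 (xmax i)) (c i))
    (hmono : ∀ i, MonotoneOn (c i) (Set.Icc 0 (xmax i)))
    (hcont : ∀ i, ContinuousOn (c i) (Set.Icc 0 (xmax i)))
    (hc0 : ∀ i, c i 0 = 0)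
    (hfeas : d ≤ ∑ i, xmax i)
    (dp : Fin n → ℝ → ℝ)
    (hdp : ∀ i, ∀ y, 0 < y → y < xmax i →
      HasDerivWithinAt (c i) (dp i y) (Set.Icc y (xmax i)) y)
    (Ihat : Finset (Fin n))
    (hIhat : ∀ i, i ∈ Ihat ↔
      (d < xmax i ∧ ∀ y ∈ Set.Ioc (0 : ℝ) d, dp i y < (w i + c i y) / y))
    (hne : Ihat.Nonempty)
    (ε : Fin n → ℝ)
    (hεpos : ∀ i ∈ Ihat, 0 < ε i)
    (hεcap : ∀ i ∈ Ihat, d + ε i ≤ xmax i)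
    (hεavg : ∀ i ∈ Ihat, ∀ y ∈ Set.Ioc (0 : ℝ) (d + ε i), dp i y < (w i + c i y) / y)
    (π πh : ℝ → Fin n → ℝ)
    (hπ : ∀ p i, IsGreatest ((fun ux => p * ux.2 - Cost (w i) (c i) ux) ''
        Gen (xmax i)) (π p i))
    (hπh : ∀ p, ∀ i ∈ Ihat, IsGreatest ((fun ux => p * ux.2 - Cost (w i) (c i) ux) ''
        Ghat (xmax i) (xcmax n xmax d i) (ε i)) (πh p i))
    (S : Finset (Fin n)) (hS : S ⊆ Ihat)
    (hrem : ∃ i ∈ Ihat \ S, ∀ j ∈ Ihat,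
      (w i + c i (d + ε i)) / (d + ε i) ≤ (w j + c j (d + ε j)) / (d + ε j)) :
    {p : ℝ | ∀ q, q * d - ∑ i ∈ Ihatᶜ, π q i - ∑ i ∈ Ihat \ S, πh q i
        ≤ p * d - ∑ i ∈ Ihatᶜ, π p i - ∑ i ∈ Ihat \ S, πh p i}
      = {p : ℝ | ∀ q, q * d - ∑ i ∈ Ihatᶜ, π q i - ∑ i ∈ Ihat, πh q i
        ≤ p * d - ∑ i ∈ Ihatᶜ, π p i - ∑ i ∈ Ihat, πh p i} :=
  stmt_6_general n d hd w xmax c hw hcont hc0 dp hdp Ihat ε hεpos hεcap hεavg π πh hπ hπh S hrem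
end
end

section
/- Assume ε_i > 0 for all i, and additionally for every i ∈ Î that d + ε_i ≤ x_i^max and (w_i + c_i(y))/y > ∂₊c_i(y) for all y ∈ (0, d + ε_i]. Then every p̃ ∈ P̃⁺(ε) satisfies: either p̃ ∈ P⁺, or p < p̃ for every p ∈ P⁺. That is, each modified convex hull price either coincides with a convex hull price or strictly exceeds all convex hull prices. -/
noncomputable section

private lemma conc3 {f : ℝ → ℝ} {lo hi : ℝ} (hf : ConvexOn ℝ (Set.Icc lo hi) f)
    {s t r : ℝ} (hs : s ∈ Set.Icc lo hi) (hr : r ∈ Set.Icc lo hi)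
    (hst : s ≤ t) (htr : t ≤ r) :
    (r - s) * f t ≤ (r - t) * f s + (t - s) * f r := by
  rcases eq_or_lt_of_le (hst.trans htr) with h | h
  · subst h
    have h1 : t = s := le_antisymm htr hst
    subst h1
    simp
  · have hrs : 0 < r - s := sub_pos.2 h
    have ha : 0 ≤ (r - t)/(r - s) := div_nonneg (by linarith) hrs.le
    have hb : 0 ≤ (t - s)/(r - s) := div_nonneg (by linarith) hrs.le
    have hab : (r - t)/(r - s) + (t - s)/(r - s) = 1 := by field_simp; ring
    have hkey := hf.2 hs hr ha hb hab
    rw [smul_eq_mul, smul_eq_mul] at hkey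
    have harg : (r - t)/(r - s) * s + (t - s)/(r - s) * r = t := by field_simp; ring
    rw [harg] at hkey
    have h2 : (r - s) * f t ≤ (r - s) * ((r - t)/(r - s) * f s + (t - s)/(r - s) * f r) :=
      mul_le_mul_of_nonneg_left hkey hrs.le
    calc (r - s) * f t ≤ _ := h2
      _ = (r - t) * f s + (t - s) * f r := by field_simp

/-- If the concave map `z ↦ q*z - (W + f z)` has value at `r` below its value at `s`,
with `s ≤ t < r`, then its value at `r` is strictly below its value at `t`. -/
private lemma concave_slide {f : ℝ → ℝ} {lo hi : ℝ} (hf : ConvexOn ℝ (Set.Icc lo hi) f)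
    {q W s t r : ℝ} (hs : s ∈ Set.Icc lo hi) (hr : r ∈ Set.Icc lo hi)
    (hst : s ≤ t) (htr : t < r)
    (hv : q * r - (W + f r) < q * s - (W + f s)) :
    q * r - (W + f r) < q * t - (W + f t) := by
  by_contra hcon
  push_neg at hcon
  have h3 := conc3 hf hs hr hst htr.le
  have h4 := mul_lt_mul_of_pos_left hv (show (0:ℝ) < r - t from sub_pos.2 htr)
  have h5 := mul_le_mul_of_nonneg_left hcon (show (0:ℝ) ≤ r - s by
    rcases eq_or_lt_of_le (hst.trans htr.le) with h | h <;> linarith)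
  linarith [h3, h4, h5]

private lemma concave_slide' {f : ℝ → ℝ} {lo hi : ℝ} (hf : ConvexOn ℝ (Set.Icc lo hi) f)
    {q W s t r : ℝ} (hs : s ∈ Set.Icc lo hi) (hr : r ∈ Set.Icc lo hi)
    (hst : s ≤ t) (htr : t ≤ r)
    (hv : q * r - (W + f r) < q * s - (W + f s)) :
    q * r - (W + f r) ≤ q * t - (W + f t) := by
  rcases eq_or_lt_of_le htr with h | h
  · rw [h]
  · exact (concave_slide hf hs hr hst h hv).le

set_option maxHeartbeats 1000000 in
/-- Proposition 8: for sufficiently small `ε_i > 0`, every modified convex hull price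
`p̃ ∈ P̃⁺(ε)` either belongs to `P⁺` or strictly exceeds every element of `P⁺`.
The smallness condition on `ε_i` is imposed for every LNMGU `i` (i.e. every `i` with
`xmax i > d` and `(w_i + c_i y)/y > ∂₊c_i(y)` on `(0, d]`). -/
theorem stmt_7 (n : ℕ) (d : ℝ) (hd : 0 < d)
    (w xmax : Fin n → ℝ) (c : Fin n → ℝ → ℝ)
    (hxmax : ∀ i, 0 < xmax i) (hw : ∀ i, 0 ≤ w i)
    (hconv : ∀ i, ConvexOn ℝ (Set.Icc 0 (xmax i)) (c i))
    (hmono : ∀ i, MonotoneOn (c i) (Set.Icc 0 (xmax i)))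
    (hcont : ∀ i, ContinuousOn (c i) (Set.Icc 0 (xmax i)))
    (hc0 : ∀ i, c i 0 = 0)
    (hfeas : d ≤ ∑ i, xmax i)
    (dp : Fin n → ℝ → ℝ)
    (hdp : ∀ i, ∀ y, 0 < y → y < xmax i →
      HasDerivWithinAt (c i) (dp i y) (Set.Icc y (xmax i)) y)
    (ε : Fin n → ℝ) (hε : ∀ i, 0 < ε i)
    (hεsmall : ∀ i, (d < xmax i ∧ ∀ y ∈ Set.Ioc (0 : ℝ) d, dp i y < (w i + c i y) / y) →
      (d + ε i ≤ xmax i ∧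
        ∀ y ∈ Set.Ioc (0 : ℝ) (d + ε i), dp i y < (w i + c i y) / y))
    (π πt : ℝ → Fin n → ℝ)
    (hπ : ∀ p i, IsGreatest ((fun ux => p * ux.2 - Cost (w i) (c i) ux) ''
        Gen (xmax i)) (π p i))
    (hπt : ∀ p i, IsGreatest ((fun ux => p * ux.2 - Cost (w i) (c i) ux) ''
        Gtilde (xmax i) (xcmin n xmax d i) (xcmax n xmax d i) (ε i)) (πt p i)) :
    ∀ pt ∈ {p : ℝ | ∀ q, q * d - ∑ i, πt q i ≤ p * d - ∑ i, πt p i},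
      pt ∈ {p : ℝ | ∀ q, q * d - ∑ i, π q i ≤ p * d - ∑ i, π p i} ∨
        ∀ p ∈ {p : ℝ | ∀ q, q * d - ∑ i, π q i ≤ p * d - ∑ i, π p i}, p < pt := by
  classical
  have hsub : ∀ i : Fin n,
      Gtilde (xmax i) (xcmin n xmax d i) (xcmax n xmax d i) (ε i) ⊆ Gen (xmax i) := by
    intro i ux hux
    rcases hux with h | h
    · rw [Set.mem_singleton_iff] at h
      subst h
      exact ⟨Or.inl rfl, le_refl 0, by simp⟩
    · obtain ⟨h1, h2, h3⟩ := h
      exact ⟨Or.inr h1, le_trans (le_max_right _ _) h2, by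
        rw [h1, one_mul]; exact h3.trans (min_le_right _ _)⟩
  have hle : ∀ q (i : Fin n), πt q i ≤ π q i := by
    intro q i
    obtain ⟨ux, hmem, hv⟩ := (hπt q i).1
    exact hv ▸ (hπ q i).2 ⟨ux, hsub i hmem, rfl⟩
  have hπt0 : ∀ q (i : Fin n), 0 ≤ πt q i := by
    intro q i
    have hm : (((0:ℝ), (0:ℝ))) ∈
        Gtilde (xmax i) (xcmin n xmax d i) (xcmax n xmax d i) (ε i) :=
      Set.mem_union_left _ rfl
    have h := (hπt q i).2 ⟨_, hm, rfl⟩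
    simpa [Cost, hc0 i] using h
  intro pt hpt
  simp only [Set.mem_setOf_eq] at hpt
  by_cases hall : ∀ i, π pt i = πt pt i
  · left
    simp only [Set.mem_setOf_eq]
    intro q
    have h1 : ∑ i, πt q i ≤ ∑ i, π q i := Finset.sum_le_sum fun i _ => hle q i
    have h2 := hpt q
    have h3 : ∑ i, πt pt i = ∑ i, π pt i :=
      Finset.sum_congr rfl fun i _ => (hall i).symm
    linarith
  · push_neg at hall
    obtain ⟨i, hnei⟩ := hall
    have hlt : πt pt i < π pt i := (hle pt i).lt_of_ne fun h => hnei h.symm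
    obtain ⟨a, ha⟩ : ∃ a, a = max (xcmin n xmax d i - ε i) 0 := ⟨_, rfl⟩
    obtain ⟨b, hb⟩ : ∃ b, b = min (xcmax n xmax d i + ε i) (xmax i) := ⟨_, rfl⟩
    obtain ⟨S, hS⟩ : ∃ S, S = ∑ j ∈ Finset.univ.erase i, xmax j := ⟨_, rfl⟩
    have hGt_value : ∀ (r z : ℝ), a ≤ z → z ≤ b →
        r * z - (w i + c i z) ≤ πt r i := by
      intro r z h1 h2
      rw [ha] at h1
      rw [hb] at h2
      have hm : ((1:ℝ), z) ∈
          Gtilde (xmax i) (xcmin n xmax d i) (xcmax n xmax d i) (ε i) :=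
        Set.mem_union_right _ ⟨rfl, h1, h2⟩
      have h := (hπt r i).2 ⟨_, hm, rfl⟩
      simp only [Cost] at h
      linarith [h]
    have hS0 : 0 ≤ S := by
      rw [hS]; exact Finset.sum_nonneg fun j _ => (hxmax j).le
    have hsplit : xmax i + S = ∑ j, xmax j := by
      rw [hS]; exact Finset.add_sum_erase _ _ (Finset.mem_univ i)
    have hxcmin0 : 0 ≤ xcmin n xmax d i := le_max_right _ _
    have hεnn := (hε i).le
    have hxcminle : xcmin n xmax d i ≤ xcmax n xmax d i := by
      have h1 : d - S ≤ xmax i := by linarith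
      have h2 : d - S ≤ d := by linarith
      unfold xcmin xcmax
      rw [← hS]
      exact max_le (le_min h2 h1) (le_min hd.le (hxmax i).le)
    have ha0 : 0 ≤ a := by rw [ha]; exact le_max_right _ _
    have haxcmin : a ≤ xcmin n xmax d i := by
      rw [ha]; exact max_le (by linarith [hε i]) hxcmin0
    have hxcmaxb : xcmax n xmax d i ≤ b := by
      rw [hb]; exact le_min (by linarith [hε i]) (min_le_right d (xmax i))
    have hxcmaxd : xcmax n xmax d i ≤ d := min_le_left _ _
    have had : a ≤ d := haxcmin.trans (hxcminle.trans hxcmaxd)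
    have hab : a ≤ b := haxcmin.trans (hxcminle.trans hxcmaxb)
    have hbxmax : b ≤ xmax i := by rw [hb]; exact min_le_right _ _
    obtain ⟨⟨u, x⟩, hmem, hval⟩ := (hπ pt i).1
    simp only [Gen, Set.mem_setOf_eq] at hmem
    obtain ⟨hu, hx0, hxu⟩ := hmem
    rcases hu with hu | hu
    · exfalso
      subst hu
      rw [zero_mul] at hxu
      have hx00 : x = 0 := le_antisymm hxu hx0
      subst hx00
      simp only [Cost, hc0 i, mul_zero, sub_zero, add_zero, zero_sub, neg_eq_iff_eq_neg,
        mul_zero] at hval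
      have hπ0 : π pt i = 0 := by
        have : pt * (0:ℝ) - (w i * 0 + c i 0) = 0 := by rw [hc0 i]; ring
        have h2 := (hπ pt i).1
        -- use hval directly
        simpa [Cost, hc0 i] using hval.symm
      linarith [hπt0 pt i]
    subst hu
    rw [one_mul] at hxu
    have hvalA : pt * x - (w i + c i x) = π pt i := by
      have : Cost (w i) (c i) ((1:ℝ), x) = w i + c i x := by simp [Cost]
      rw [← this]
      exact hval
    have hxIcc : x ∈ Set.Icc 0 (xmax i) := ⟨hx0, hxu⟩
    have hdecr : ∀ z, a ≤ z → z ≤ b →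
        pt * z - (w i + c i z) < pt * x - (w i + c i x) := by
      intro z h1 h2
      have h3 := hGt_value pt z h1 h2
      linarith
    have hnotab : ¬ (a ≤ x ∧ x ≤ b) := by
      rintro ⟨h1, h2⟩
      exact lt_irrefl _ (hdecr x h1 h2)
    rcases lt_or_ge x a with hxa | hax
    · -- LOWER CUT: contradiction with pt being a modified maximizer
      exfalso
      have ha0' : 0 < a := lt_of_le_of_lt hx0 hxa
      have hεlt : 0 ≤ xcmin n xmax d i - ε i := by
        by_contra h
        push_neg at h
        have : a = 0 := by rw [ha]; exact max_eq_right h.le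
        linarith
      have haeq : a = xcmin n xmax d i - ε i := by
        rw [ha]; exact max_eq_left hεlt
      have hxcminpos : 0 < xcmin n xmax d i := by linarith [hε i]
      have hdS : 0 < d - S := by
        by_contra h
        push_neg at h
        have : xcmin n xmax d i = 0 := by
          unfold xcmin; rw [← hS]; exact max_eq_right h
        linarith
      have hxcmineq : xcmin n xmax d i = d - S := by
        unfold xcmin; rw [← hS]; exact max_eq_left hdS.le
      obtain ⟨m, hm⟩ : ∃ m, m = a + ε i / 2 := ⟨_, rfl⟩
      have ham : a < m := by rw [hm]; linarith [hε i]
      have hmb : m ≤ b := by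
        rw [hm, haeq]; linarith [hxcminle, hxcmaxb]
      have hm0 : 0 ≤ m := by linarith
      have hmxmax : m ≤ xmax i := hmb.trans hbxmax
      have hmIcc : m ∈ Set.Icc 0 (xmax i) := ⟨hm0, hmxmax⟩
      have hvm : pt * m - (w i + c i m) < pt * x - (w i + c i x) :=
        hdecr m ham.le hmb
      have hma : pt * m - (w i + c i m) < pt * a - (w i + c i a) :=
        concave_slide (hconv i) hxIcc hmIcc hxa.le ham hvm
      obtain ⟨γ, hγ⟩ : ∃ γ, γ = (pt * a - (w i + c i a)) - (pt * m - (w i + c i m)) := ⟨_, rfl⟩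
      have hγpos : 0 < γ := by rw [hγ]; exact sub_pos.2 hma
      obtain ⟨δ, hδ⟩ : ∃ δ, δ = γ / (2 * (xmax i + 1)) := ⟨_, rfl⟩
      have hδpos : 0 < δ := by
        rw [hδ]; exact div_pos hγpos (by linarith [hxmax i])
      have hδeq : δ * (2 * (xmax i + 1)) = γ := by
        rw [hδ]; exact div_mul_cancel₀ _ (ne_of_gt (by linarith [hxmax i]))
      obtain ⟨q, hq⟩ : ∃ q, q = pt + δ := ⟨_, rfl⟩
      have hqpt : 0 < q - pt := by rw [hq]; linarith
      have claimL : ∀ z, m ≤ z → z ≤ b →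
          q * z - (w i + c i z) < q * a - (w i + c i a) := by
        intro z h1 h2
        have hzIcc : z ∈ Set.Icc 0 (xmax i) := ⟨by linarith, h2.trans hbxmax⟩
        have hvz : pt * z - (w i + c i z) < pt * x - (w i + c i x) :=
          hdecr z (by linarith) h2
        have hzm : pt * z - (w i + c i z) ≤ pt * m - (w i + c i m) :=
          concave_slide' (hconv i) hxIcc hzIcc (by linarith) h1 hvz
        have hδz : δ * z ≤ δ * xmax i :=
          mul_le_mul_of_nonneg_left (h2.trans hbxmax) hδpos.le
        have hδa : 0 ≤ δ * a := mul_nonneg hδpos.le ha0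
        have hz1 : q * z = pt * z + δ * z := by rw [hq]; ring
        have ha1 : q * a = pt * a + δ * a := by rw [hq]; ring
        linarith [hzm, hδz, hδa, hδeq, hδpos, hγpos, hz1, ha1, hγ]
      have hch : ∀ j, ∃ ux : ℝ × ℝ,
          ux ∈ Gtilde (xmax j) (xcmin n xmax d j) (xcmax n xmax d j) (ε j) ∧
          q * ux.2 - Cost (w j) (c j) ux = πt q j := fun j => (hπt q j).1
      choose X hX1 hX2 using hch
      have hGen2 : ∀ j, 0 ≤ (X j).2 ∧ (X j).2 ≤ xmax j := by
        intro j
        have h := hsub j (hX1 j)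
        simp only [Gen, Set.mem_setOf_eq] at h
        obtain ⟨h1, h2, h3⟩ := h
        refine ⟨h2, ?_⟩
        rcases h1 with h1 | h1 <;> rw [h1] at h3
        · rw [zero_mul] at h3; linarith [hxmax j]
        · rwa [one_mul] at h3
      have hXi : (X i).2 < m := by
        have hX1i := hX1 i
        rcases hX1i with h | h
        · rw [Set.mem_singleton_iff] at h
          rw [h]
          simpa using lt_of_lt_of_le ha0' ham.le
        · obtain ⟨h1, h2, h3⟩ := h
          rw [← ha] at h2
          rw [← hb] at h3
          by_contra hge
          push_neg at hge
          have hlt2 := claimL (X i).2 hge h3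
          have hub := hGt_value q a le_rfl hab
          have heq : q * (X i).2 - (w i + c i (X i).2) = πt q i := by
            have h4 := hX2 i
            rw [Cost, h1, mul_one] at h4
            exact h4
          linarith
      have hslope : ∀ j, πt q j - πt pt j ≤ (q - pt) * (X j).2 := by
        intro j
        have h1 : pt * (X j).2 - Cost (w j) (c j) (X j) ≤ πt pt j :=
          (hπt pt j).2 ⟨X j, hX1 j, rfl⟩
        have h2 := hX2 j
        linarith [h1, h2]
      have hq1 := hpt q
      have hsum1 : ∑ j, (πt q j - πt pt j) ≤ ∑ j, (q - pt) * (X j).2 :=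
        Finset.sum_le_sum fun j _ => hslope j
      have e1 : ∑ j, (πt q j - πt pt j) = ∑ j, πt q j - ∑ j, πt pt j :=
        Finset.sum_sub_distrib _ _
      have hsum2 : (q - pt) * d ≤ (q - pt) * ∑ j, (X j).2 := by
        rw [Finset.mul_sum]
        linarith [hsum1, e1, hq1]
      have hdle : d ≤ ∑ j, (X j).2 := le_of_mul_le_mul_left hsum2 hqpt
      have hsumX : ∑ j, (X j).2 ≤ (X i).2 + S := by
        have h1 : ∑ j ∈ Finset.univ.erase i, (X j).2 ≤ S := by
          rw [hS]
          exact Finset.sum_le_sum fun j _ => (hGen2 j).2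
        have h2 : (X i).2 + ∑ j ∈ Finset.univ.erase i, (X j).2 = ∑ j, (X j).2 :=
          Finset.add_sum_erase Finset.univ (fun j => (X j).2) (Finset.mem_univ i)
        linarith
      have hmval : m = d - S - ε i / 2 := by
        rw [hm, haeq, hxcmineq]; ring
      linarith [hε i]
    · -- x is above the interval (upper cut)
      have hbx : b < x := by
        rcases lt_or_ge b x with h | h
        · exact h
        · exact absurd ⟨hax, h⟩ hnotab
      right
      intro p hp
      simp only [Set.mem_setOf_eq] at hp
      by_contra hplt
      push_neg at hplt
      have hbxmax' : b < xmax i := lt_of_lt_of_le hbx hxu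
      have h1 : xcmax n xmax d i + ε i < xmax i := by
        by_contra h
        push_neg at h
        have : b = xmax i := by rw [hb]; exact min_eq_right h
        linarith
      have hbeq : b = xcmax n xmax d i + ε i := by rw [hb]; exact min_eq_left h1.le
      have hxcmaxeq : xcmax n xmax d i = d := by
        rcases le_total d (xmax i) with h | h
        · unfold xcmax; exact min_eq_left h
        · exfalso
          have h2 : xcmax n xmax d i = xmax i := by unfold xcmax; exact min_eq_right h
          rw [h2] at h1
          linarith [hε i]
      have hdb : d < b := by rw [hbeq, hxcmaxeq]; linarith [hε i]
      have hdxmax : d < xmax i := lt_of_lt_of_le hdb hbxmax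
      have hbase : ∀ y, 0 ≤ y → y ≤ d →
          pt * y - (w i + c i y) < pt * x - (w i + c i x) := by
        intro y h1 h2
        rcases le_or_gt a y with hay | hya
        · exact hdecr y hay (by linarith)
        · have hax' := hdecr a le_rfl hab
          by_contra hcon
          push_neg at hcon
          have hyIcc : y ∈ Set.Icc 0 (xmax i) := ⟨h1, by linarith⟩
          have h3 := conc3 (hconv i) hyIcc hxIcc (le_of_lt hya) (by linarith : a ≤ x)
          have h4 := mul_le_mul_of_nonneg_left hcon (show (0:ℝ) ≤ x - a by linarith)
          have h5 := mul_lt_mul_of_pos_left hax' (show (0:ℝ) < x - y by linarith)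
          linarith [h3, h4, h5]
      have hsubIcc : Set.Icc (0:ℝ) d ⊆ Set.Icc 0 (xmax i) :=
        Set.Icc_subset_Icc le_rfl hdxmax.le
      have hcontA : ContinuousOn (fun y => pt * y - (w i + c i y)) (Set.Icc (0:ℝ) d) := by
        apply ContinuousOn.sub
        · exact (continuous_const.mul continuous_id).continuousOn
        · exact continuousOn_const.add ((hcont i).mono hsubIcc)
      obtain ⟨x₀, hx₀mem, hx₀max⟩ :=
        isCompact_Icc.exists_isMaxOn (Set.nonempty_Icc.2 hd.le) hcontA
      rw [Set.mem_Icc] at hx₀mem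
      obtain ⟨hx₀0, hx₀d⟩ := hx₀mem
      obtain ⟨γ, hγ⟩ : ∃ γ, γ = (pt * x - (w i + c i x)) - (pt * x₀ - (w i + c i x₀)) := ⟨_, rfl⟩
      have hγpos : 0 < γ := by rw [hγ]; exact sub_pos.2 (hbase x₀ hx₀0 hx₀d)
      have hπpos : 0 < π pt i := lt_of_le_of_lt (hπt0 pt i) hlt
      obtain ⟨δ, hδ⟩ : ∃ δ, δ = min γ (π pt i) / (2 * (xmax i + 1)) := ⟨_, rfl⟩
      have hminpos : 0 < min γ (π pt i) := lt_min hγpos hπpos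
      have hδpos : 0 < δ := by
        rw [hδ]; exact div_pos hminpos (by linarith [hxmax i])
      have hδeq : δ * (2 * (xmax i + 1)) = min γ (π pt i) := by
        rw [hδ]; exact div_mul_cancel₀ _ (ne_of_gt (by linarith [hxmax i]))
      obtain ⟨q, hq⟩ : ∃ q, q = p - δ / 2 := ⟨_, rfl⟩
      have hqp : q < p := by rw [hq]; linarith
      have hptq : pt - q ≤ δ / 2 := by rw [hq]; linarith
      have hub : ∀ y, 0 ≤ y → y ≤ d →
          pt * y - (w i + c i y) ≤ pt * x₀ - (w i + c i x₀) := by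
        intro y h1 h2
        exact hx₀max (Set.mem_Icc.mpr ⟨h1, h2⟩)
      have claimQ : ∀ y, 0 ≤ y → y ≤ d →
          q * y - (w i + c i y) < q * x - (w i + c i x) := by
        intro y h1 h2
        have h3 := hub y h1 h2
        have h4 : (pt - q) * (x - y) ≤ (δ/2) * (x - y) :=
          mul_le_mul_of_nonneg_right hptq (by linarith)
        have h5 : (δ/2) * (x - y) ≤ (δ/2) * (xmax i) :=
          mul_le_mul_of_nonneg_left (by linarith) (by linarith)
        linarith [h3, h4, h5, hδeq, min_le_left γ (π pt i), hδpos, hγpos, hγ]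
      have hq0 : 0 < q * x - (w i + c i x) := by
        have h4 : (pt - q) * x ≤ (δ/2) * x := mul_le_mul_of_nonneg_right hptq hx0
        have h5 : (δ/2) * x ≤ (δ/2) * xmax i :=
          mul_le_mul_of_nonneg_left hxu (by linarith)
        linarith [h4, h5, hδeq, min_le_right γ (π pt i), hδpos, hπpos, hvalA, hγ]
      have hch : ∀ j, ∃ ux : ℝ × ℝ, ux ∈ Gen (xmax j) ∧
          q * ux.2 - Cost (w j) (c j) ux = π q j := fun j => (hπ q j).1
      choose X hX1 hX2 using hch
      have hX0 : ∀ j, 0 ≤ (X j).2 := by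
        intro j
        have h := hX1 j
        simp only [Gen, Set.mem_setOf_eq] at h
        exact h.2.1
      have hmemx : ((1:ℝ), x) ∈ Gen (xmax i) :=
        ⟨Or.inr rfl, hx0, by rw [one_mul]; exact hxu⟩
      have hqx_le : q * x - (w i + c i x) ≤ π q i := by
        have h := (hπ q i).2 ⟨_, hmemx, rfl⟩
        simp only [Cost, mul_one] at h
        linarith
      have hXi : d < (X i).2 := by
        have h := hX1 i
        simp only [Gen, Set.mem_setOf_eq] at h
        obtain ⟨hu1, hx1, hx2⟩ := h
        rcases hu1 with h | h
        · exfalso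
          rw [h, zero_mul] at hx2
          have hx00 : (X i).2 = 0 := le_antisymm hx2 hx1
          have h4 := hX2 i
          rw [Cost, h, hx00, mul_zero, mul_zero, hc0 i] at h4
          simp at h4
          linarith [hqx_le, hq0]
        · by_contra hcon
          push_neg at hcon
          have h5 := claimQ (X i).2 (hX0 i) hcon
          have heq : q * (X i).2 - (w i + c i (X i).2) = π q i := by
            have h4 := hX2 i
            rw [Cost, h, mul_one] at h4
            exact h4
          linarith [hqx_le]
      have hslope : ∀ j, (p - q) * (X j).2 ≤ π p j - π q j := by
        intro j
        have h1 : p * (X j).2 - Cost (w j) (c j) (X j) ≤ π p j :=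
          (hπ p j).2 ⟨X j, hX1 j, rfl⟩
        have h2 := hX2 j
        linarith [h1, h2]
      have hq1 := hp q
      have hsum1 : ∑ j, (p - q) * (X j).2 ≤ ∑ j, (π p j - π q j) :=
        Finset.sum_le_sum fun j _ => hslope j
      have e1 : ∑ j, (π p j - π q j) = ∑ j, π p j - ∑ j, π q j :=
        Finset.sum_sub_distrib _ _
      have hsum2 : (p - q) * ∑ j, (X j).2 ≤ (p - q) * d := by
        rw [Finset.mul_sum]
        linarith [hsum1, e1, hq1]
      have hdge : ∑ j, (X j).2 ≤ d := le_of_mul_le_mul_left hsum2 (by linarith)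
      have hsingle : (X i).2 ≤ ∑ j, (X j).2 :=
        Finset.single_le_sum (fun j _ => hX0 j) (Finset.mem_univ i)
      linarith
end
end

section
/- Let ((u_i*, x_i*))_i be any minimizer of the primal problem and let p ∈ P⁺. Then the duality gap equals the total lost profit: v − v^D = Σ_i [π_i(p) − (p·x_i* − C_i(u_i*, x_i*))], and each summand π_i(p) − (p·x_i* − C_i(u_i*, x_i*)) is nonnegative. In particular the total uplift payment Σ_i [π_i(p) − (p·x_i* − C_i(u_i*, x_i*))] is the same for every choice of primal minimizer and every p ∈ P⁺. -/
noncomputable section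

/-!
The primal value is the cost of the minimizer and the dual value is the dual objective at `p`.
Because the minimizer meets demand exactly, `p * d = ∑ i, p * x_i*`, so the gap splits
generator by generator into `π_i(p) - (p * x_i* - C_i(u_i*, x_i*))`; each of these is
nonnegative because `(u_i*, x_i*)` is feasible for the profit maximization defining `π_i(p)`.
-/

open Finset

theorem IsLeast.eq_apply_of_forall_le {α β : Type*} [PartialOrder β] {s : Set α} {f : α → β}
    {v : β} {a : α} (hv : IsLeast {r | ∃ x ∈ s, r = f x} v) (ha : a ∈ s)
    (hmin : ∀ x ∈ s, f a ≤ f x) : v = f a :=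
  hv.unique ⟨⟨a, ha, rfl⟩, by rintro _ ⟨x, hx, rfl⟩; exact hmin x hx⟩

theorem IsLUB.eq_apply_of_forall_le {α β : Type*} [PartialOrder β] {f : α → β} {v : β} {a : α}
    (hv : IsLUB (Set.range f) v) (hmax : ∀ x, f x ≤ f a) : v = f a :=
  hv.unique (IsGreatest.isLUB ⟨⟨a, rfl⟩, by rintro _ ⟨x, rfl⟩; exact hmax x⟩)

theorem sum_sub_dual_eq_sum_lostProfit {ι : Type*} [Fintype ι] (C π x : ι → ℝ) (p d : ℝ)
    (hx : ∑ i, x i = d) :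
    ∑ i, C i - (p * d - ∑ i, π i) = ∑ i, (π i - (p * x i - C i)) := by
  simp only [sum_sub_distrib, ← mul_sum, hx]
  ring

theorem stmt_8_general (n : ℕ) (d : ℝ)
    (w xmax : Fin n → ℝ) (c : Fin n → ℝ → ℝ)
    (π : ℝ → Fin n → ℝ)
    (hπ : ∀ p i, IsGreatest ((fun ux => p * ux.2 - Cost (w i) (c i) ux) ''
        Gen (xmax i)) (π p i))
    (v vD : ℝ)
    (hv : IsLeast {r : ℝ | ∃ X ∈ Omega n xmax d,
        r = ∑ i, Cost (w i) (c i) (X i)} v)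
    (hvD : IsLUB (Set.range fun p => p * d - ∑ i, π p i) vD)
    (Xs : Fin n → ℝ × ℝ) (hXs : Xs ∈ Omega n xmax d)
    (hXsmin : ∀ X ∈ Omega n xmax d,
      ∑ i, Cost (w i) (c i) (Xs i) ≤ ∑ i, Cost (w i) (c i) (X i))
    (p : ℝ) (hp : ∀ q, q * d - ∑ i, π q i ≤ p * d - ∑ i, π p i) :
    v - vD = ∑ i, (π p i - (p * (Xs i).2 - Cost (w i) (c i) (Xs i)))
    ∧ ∀ i, 0 ≤ π p i - (p * (Xs i).2 - Cost (w i) (c i) (Xs i)) := by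
  rw [hv.eq_apply_of_forall_le hXs hXsmin, hvD.eq_apply_of_forall_le hp]
  exact ⟨sum_sub_dual_eq_sum_lostProfit _ _ _ p d hXs.2,
    fun i => sub_nonneg.2 ((hπ p i).2 (Set.mem_image_of_mem _ (hXs.1 i)))⟩

/-- The duality gap equals the total lost profit: for any primal minimizer `X*` and any
`p ∈ P⁺`, `v − v^D = Σ_i [π_i(p) − (p·x_i* − C_i(X_i*))]`, and each summand is
nonnegative.  In particular the total uplift is independent of the choice of `X*`
and of `p ∈ P⁺`. -/
theorem stmt_8 (n : ℕ) (d : ℝ) (hd : 0 < d)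
    (w xmax : Fin n → ℝ) (c : Fin n → ℝ → ℝ)
    (hxmax : ∀ i, 0 < xmax i) (hw : ∀ i, 0 ≤ w i)
    (hconv : ∀ i, ConvexOn ℝ (Set.Icc 0 (xmax i)) (c i))
    (hmono : ∀ i, MonotoneOn (c i) (Set.Icc 0 (xmax i)))
    (hcont : ∀ i, ContinuousOn (c i) (Set.Icc 0 (xmax i)))
    (hc0 : ∀ i, c i 0 = 0)
    (hfeas : d ≤ ∑ i, xmax i)
    (π : ℝ → Fin n → ℝ)
    (hπ : ∀ p i, IsGreatest ((fun ux => p * ux.2 - Cost (w i) (c i) ux) ''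
        Gen (xmax i)) (π p i))
    (v vD : ℝ)
    (hv : IsLeast {r : ℝ | ∃ X ∈ Omega n xmax d,
        r = ∑ i, Cost (w i) (c i) (X i)} v)
    (hvD : IsLUB (Set.range fun p => p * d - ∑ i, π p i) vD)
    (Xs : Fin n → ℝ × ℝ) (hXs : Xs ∈ Omega n xmax d)
    (hXsmin : ∀ X ∈ Omega n xmax d,
      ∑ i, Cost (w i) (c i) (Xs i) ≤ ∑ i, Cost (w i) (c i) (X i))
    (p : ℝ) (hp : ∀ q, q * d - ∑ i, π q i ≤ p * d - ∑ i, π p i) :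
    v - vD = ∑ i, (π p i - (p * (Xs i).2 - Cost (w i) (c i) (Xs i)))
    ∧ ∀ i, 0 ≤ π p i - (p * (Xs i).2 - Cost (w i) (c i) (Xs i)) :=
  stmt_8_general n d w xmax c π hπ v vD hv hvD Xs hXs hXsmin p hp
end
end

section
/- Let 0 < m ≤ x^max and suppose the average total cost is minimized at m on (0, m], strictly: (w + c(x))/x > (w + c(m))/m for all x ∈ (0, m). Consider, for a price p ∈ ℝ, the maximization of (u,x) ↦ p·x − C(u,x) over Ĝ = {(u,x) ∈ G : x ≤ m}. Then the set of output volumes of the maximizers is: {0} if p < (w + c(m))/m; {0, m} if p = (w + c(m))/m; and {m} if p > (w + c(m))/m. Moreover the optimal profit equals 0 when p ≤ (w + c(m))/m. -/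
noncomputable section

/-- Suppose the average total cost `(w + c x)/x` is strictly minimized at `m` on `(0,m]`,
`0 < m ≤ xmax`.  Maximizing the profit `p·x − C(u,x)` over `Ĝ = {(u,x) ∈ G : x ≤ m}`, the
set of maximizing output volumes is `{0}` if `p < (w + c m)/m`, `{0, m}` if
`p = (w + c m)/m`, and `{m}` if `p > (w + c m)/m`; moreover the optimal profit is `0`
whenever `p ≤ (w + c m)/m`. -/
theorem stmt_15 (xmax w : ℝ) (c : ℝ → ℝ)
    (hxmax : 0 < xmax) (hw : 0 ≤ w)
    (hconv : ConvexOn ℝ (Set.Icc 0 xmax) c)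
    (hmono : MonotoneOn c (Set.Icc 0 xmax))
    (hcont : ContinuousOn c (Set.Icc 0 xmax))
    (hc0 : c 0 = 0)
    (m : ℝ) (hm0 : 0 < m) (hmx : m ≤ xmax)
    (hstrict : ∀ x ∈ Set.Ioo (0 : ℝ) m, (w + c m) / m < (w + c x) / x)
    (p : ℝ) :
    (p < (w + c m) / m →
      {x : ℝ | ∃ u, (u, x) ∈ {ux ∈ Gen xmax | ux.2 ≤ m} ∧
        IsMaxOn (fun ux => p * ux.2 - Cost w c ux) {ux ∈ Gen xmax | ux.2 ≤ m} (u, x)}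
        = {0})
    ∧ (p = (w + c m) / m →
      {x : ℝ | ∃ u, (u, x) ∈ {ux ∈ Gen xmax | ux.2 ≤ m} ∧
        IsMaxOn (fun ux => p * ux.2 - Cost w c ux) {ux ∈ Gen xmax | ux.2 ≤ m} (u, x)}
        = {0, m})
    ∧ ((w + c m) / m < p →
      {x : ℝ | ∃ u, (u, x) ∈ {ux ∈ Gen xmax | ux.2 ≤ m} ∧
        IsMaxOn (fun ux => p * ux.2 - Cost w c ux) {ux ∈ Gen xmax | ux.2 ≤ m} (u, x)}
        = {m})
    ∧ (p ≤ (w + c m) / m →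
      IsGreatest ((fun ux => p * ux.2 - Cost w c ux) '' {ux ∈ Gen xmax | ux.2 ≤ m}) 0) := by
  classical
  set A := (w + c m) / m with hA
  set S := {ux ∈ Gen xmax | ux.2 ≤ m} with hS
  set f := fun ux : ℝ × ℝ => p * ux.2 - Cost w c ux with hf
  have hcm : w + c m = m * A := by rw [hA]; field_simp
  have hcmnn : 0 ≤ c m := by
    have h := hmono ⟨le_refl 0, hxmax.le⟩ ⟨hm0.le, hmx⟩ hm0.le
    rw [hc0] at h; exact h
  have hAnn : 0 ≤ A := div_nonneg (by linarith) hm0.le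
  have h00 : ((0:ℝ), (0:ℝ)) ∈ S := ⟨⟨Or.inl rfl, le_refl 0, by simp⟩, hm0.le⟩
  have h1m : ((1:ℝ), m) ∈ S := ⟨⟨Or.inr rfl, hm0.le, by simpa using hmx⟩, le_refl m⟩
  have hf00 : f (0, 0) = 0 := by simp [hf, Cost, hc0]
  have hf1m : f (1, m) = m * (p - A) := by
    show p * m - (w * 1 + c m) = m * (p - A)
    linear_combination -hcm
  have key : ∀ ux : ℝ × ℝ, ux ∈ S →
      (ux.2 = 0 ∧ f ux ≤ 0) ∨ (ux = (1, m) ∧ f ux = m * (p - A)) ∨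
      (0 < ux.2 ∧ ux.2 < m ∧ f ux < ux.2 * (p - A)) := by
    rintro ⟨u, x⟩ ⟨⟨hu, hx0, hxu⟩, hxm⟩
    simp only at hu hx0 hxu hxm
    rcases eq_or_lt_of_le hx0 with hx | hx
    · left
      have hx' : x = 0 := hx.symm
      subst hx'
      refine ⟨rfl, ?_⟩
      have hwu : 0 ≤ w * u := by
        rcases hu with h | h
        · rw [h]; simp
        · rw [h]; simpa using hw
      show p * 0 - (w * u + c 0) ≤ 0
      rw [hc0]; linarith
    · have hu1 : u = 1 := by
        rcases hu with h | h
        · exfalso; rw [h, zero_mul] at hxu; linarith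
        · exact h
      subst hu1
      rcases eq_or_lt_of_le hxm with hxe | hxl
      · subst hxe
        exact Or.inr (Or.inl ⟨rfl, hf1m⟩)
      · right; right
        refine ⟨hx, hxl, ?_⟩
        have hstr := hstrict x ⟨hx, hxl⟩
        have hax : A * x < w + c x := (lt_div_iff₀ hx).mp hstr
        show p * x - (w * 1 + c x) < x * (p - A)
        nlinarith
  have hub : ∀ ux ∈ S, f ux ≤ max 0 (m * (p - A)) := by
    intro ux hux
    rcases key ux hux with ⟨_, h⟩ | ⟨_, h⟩ | ⟨hx, hxl, h⟩
    · exact le_trans h (le_max_left _ _)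
    · exact h ▸ le_max_right _ _
    · rcases le_or_gt p A with hp | hp
      · have hle : ux.2 * (p - A) ≤ 0 := mul_nonpos_of_nonneg_of_nonpos hx.le (by linarith)
        exact le_trans h.le (le_trans hle (le_max_left _ _))
      · have hle : ux.2 * (p - A) ≤ m * (p - A) :=
          mul_le_mul_of_nonneg_right hxl.le (by linarith)
        exact le_trans h.le (le_trans hle (le_max_right _ _))
  refine ⟨?_, ?_, ?_, ?_⟩
  · -- p < A
    intro hp
    have hmneg : m * (p - A) < 0 := mul_neg_of_pos_of_neg hm0 (by linarith)
    ext x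
    simp only [Set.mem_setOf_eq, Set.mem_singleton_iff]
    constructor
    · rintro ⟨u, hmem, hmax⟩
      have hge : 0 ≤ f (u, x) := hf00 ▸ hmax h00
      rcases key (u, x) hmem with ⟨h, _⟩ | ⟨h, heq⟩ | ⟨hx, hxl, h⟩
      · exact h
      · exfalso; rw [heq] at hge; linarith
      · exfalso
        have h' : f (u, x) < x * (p - A) := h
        have hneg : x * (p - A) < 0 := mul_neg_of_pos_of_neg hx (by linarith)
        linarith
    · rintro rfl
      refine ⟨0, h00, ?_⟩
      intro ux hux
      show f ux ≤ f (0, 0)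
      rw [hf00]
      calc f ux ≤ max 0 (m * (p - A)) := hub ux hux
        _ = 0 := max_eq_left hmneg.le
  · -- p = A
    intro hp
    have hz : m * (p - A) = 0 := by rw [hp]; ring
    have hfm0 : f (1, m) = 0 := by rw [hf1m, hz]
    have hmax0 : IsMaxOn f S (0, 0) := by
      intro ux hux
      show f ux ≤ f (0, 0)
      rw [hf00]
      calc f ux ≤ max 0 (m * (p - A)) := hub ux hux
        _ = 0 := by rw [hz]; simp
    ext x
    simp only [Set.mem_setOf_eq, Set.mem_insert_iff, Set.mem_singleton_iff]
    constructor
    · rintro ⟨u, hmem, hmax⟩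
      have hge : 0 ≤ f (u, x) := hf00 ▸ hmax h00
      rcases key (u, x) hmem with ⟨h, _⟩ | ⟨h, _⟩ | ⟨hx, hxl, h⟩
      · exact Or.inl h
      · right; exact congrArg Prod.snd h
      · exfalso
        have h' : f (u, x) < x * (p - A) := h
        have hneg : x * (p - A) = 0 := by rw [hp]; ring
        linarith
    · have hmaxm : IsMaxOn f S (1, m) := by
        intro ux hux
        show f ux ≤ f (1, m)
        rw [hfm0]
        calc f ux ≤ f (0, 0) := hmax0 hux
          _ = 0 := hf00
      rintro (rfl | rfl)
      · exact ⟨0, h00, hmax0⟩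
      · exact ⟨1, h1m, hmaxm⟩
  · -- A < p
    intro hp
    have hfm : 0 < f (1, m) := by rw [hf1m]; exact mul_pos hm0 (by linarith)
    have hmaxm : IsMaxOn f S (1, m) := by
      intro ux hux
      show f ux ≤ f (1, m)
      rcases key ux hux with ⟨_, h⟩ | ⟨_, h⟩ | ⟨hx, hxl, h⟩
      · linarith
      · rw [h, hf1m]
      · have hle : ux.2 * (p - A) ≤ m * (p - A) :=
          mul_le_mul_of_nonneg_right hxl.le (by linarith)
        rw [hf1m]; linarith
    ext x
    simp only [Set.mem_setOf_eq, Set.mem_singleton_iff]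
    constructor
    · rintro ⟨u, hmem, hmax⟩
      have hge : f (1, m) ≤ f (u, x) := hmax h1m
      rcases key (u, x) hmem with ⟨h, hle⟩ | ⟨h, _⟩ | ⟨hx, hxl, h⟩
      · exfalso; linarith
      · exact congrArg Prod.snd h
      · exfalso
        have h' : f (u, x) < x * (p - A) := h
        have hlt : x * (p - A) < m * (p - A) :=
          mul_lt_mul_of_pos_right hxl (by linarith)
        rw [hf1m] at hge
        linarith
    · rintro rfl
      exact ⟨1, h1m, hmaxm⟩
  · -- p ≤ A
    intro hp
    have hm' : m * (p - A) ≤ 0 := mul_nonpos_of_nonneg_of_nonpos hm0.le (by linarith)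
    constructor
    · exact ⟨(0, 0), h00, hf00⟩
    · rintro y ⟨ux, hux, rfl⟩
      calc f ux ≤ max 0 (m * (p - A)) := hub ux hux
        _ = 0 := max_eq_left hm'
end
end

section
/- Let S be a nonempty finite set of generators, and let x° = (x_i°)_{i∈S} minimize Σ_{i∈S} c_i(x_i) over {x : 0 ≤ x_i ≤ x_i^max for all i ∈ S, Σ_{i∈S} x_i = d'}, where 0 ≤ d' ≤ Σ_{i∈S} x_i^max. Then there exists λ ∈ ℝ such that: ∂₋c_i(x_i^max) ≤ λ for every i ∈ S with x_i° = x_i^max; λ ≤ ∂₊c_i(0) for every i ∈ S with x_i° = 0; and ∂₋c_i(x_i°) ≤ λ ≤ ∂₊c_i(x_i°) for every i ∈ S with 0 < x_i° < x_i^max. -/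
open Filter Set Topology

/-!
Moving a small amount `ε` of output from a generator `i` with `x°ᵢ > 0` to a generator `j` with
`x°ⱼ < xⱼᵐᵃˣ` keeps the dispatch feasible, so it cannot lower the total cost; for `i = j` the
same inequality `cᵢ(x°ᵢ) + cⱼ(x°ⱼ) ≤ cᵢ(x°ᵢ - ε) + cⱼ(x°ⱼ + ε)` is midpoint convexity. Dividing by
`ε → 0⁺` gives `∂₋cᵢ(x°ᵢ) ≤ ∂₊cⱼ(x°ⱼ)` for all such `i, j`, and any `λ` separating these two
finite families of marginal costs is a multiplier.
-/

lemma HasDerivWithinAt.nonneg_of_eventually_le {φ : ℝ → ℝ} {L a : ℝ}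
    (hφ : HasDerivWithinAt φ L (Ioi a) a) (hmin : ∀ᶠ t in 𝓝[>] a, φ a ≤ φ t) : 0 ≤ L := by
  refine ge_of_tendsto ((hasDerivWithinAt_iff_tendsto_slope' (s := Ioi a) (lt_irrefl a)).1 hφ) ?_
  filter_upwards [hmin, self_mem_nhdsWithin] with t hφt (ht : a < t)
  rw [slope_def_field]
  exact div_nonneg (sub_nonneg.2 hφt) (sub_nonneg.2 ht.le)

lemma le_of_hasDerivWithinAt_of_eventually_add_le {f g : ℝ → ℝ} {a b s x y t : ℝ}
    (hs : s < x) (ht : y < t)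
    (hf : HasDerivWithinAt f a (Icc s x) x) (hg : HasDerivWithinAt g b (Icc y t) y)
    (hle : ∀ᶠ ε in 𝓝[>] 0, f x + g y ≤ f (x - ε) + g (y + ε)) : a ≤ b := by
  have hf' : HasDerivWithinAt (fun ε => f (x - ε)) (-a) (Ioi 0) 0 := by
    simpa [Function.comp_def] using
      (hf.mono_of_mem_nhdsWithin (Icc_mem_nhdsLE hs)).scomp_of_eq (0 : ℝ)
      ((hasDerivWithinAt_id (0 : ℝ) (Ioi 0)).const_sub x)
      (fun ε (hε : 0 < ε) => show x - ε ≤ x by linarith) (by simp)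
  have hg' : HasDerivWithinAt (fun ε => g (y + ε)) b (Ioi 0) 0 := by
    simpa [Function.comp_def] using
      (hg.mono_of_mem_nhdsWithin (Icc_mem_nhdsGE ht)).scomp_of_eq (0 : ℝ)
      ((hasDerivWithinAt_id (0 : ℝ) (Ioi 0)).const_add y)
      (fun ε (hε : 0 < ε) => show y ≤ y + ε by linarith) (by simp)
  have := (hf'.add hg').nonneg_of_eventually_le (by simpa using hle)
  linarith

lemma Finset.exists_between_of_forall_le {ι : Type*} (A B : Finset ι) (f g : ι → ℝ)
    (h : ∀ i ∈ A, ∀ j ∈ B, f i ≤ g j) : ∃ r, (∀ i ∈ A, f i ≤ r) ∧ ∀ j ∈ B, r ≤ g j := by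
  rcases A.eq_empty_or_nonempty with rfl | hA
  · obtain ⟨r, hr⟩ := (B.finite_toSet.image g).bddBelow
    exact ⟨r, by simp, fun j hj => hr (Set.mem_image_of_mem g hj)⟩
  · exact ⟨A.sup' hA f, fun i hi => A.le_sup' f hi, fun j hj => A.sup'_le hA f (h · · j hj)⟩

section Dispatch

variable {ι : Type*} {S : Finset ι} {xmax : ι → ℝ} {c : ι → ℝ → ℝ} {d' : ℝ} {x0 : ι → ℝ}

lemma add_le_of_transfer (hx0feas : ∀ i ∈ S, x0 i ∈ Icc 0 (xmax i))
    (hx0sum : ∑ i ∈ S, x0 i = d')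
    (hx0min : ∀ x : ι → ℝ, (∀ i ∈ S, x i ∈ Icc 0 (xmax i)) →
      ∑ i ∈ S, x i = d' → ∑ i ∈ S, c i (x0 i) ≤ ∑ i ∈ S, c i (x i))
    {i j : ι} (hi : i ∈ S) (hj : j ∈ S) (hij : i ≠ j) {ε : ℝ} (hε : 0 ≤ ε)
    (hεi : ε ≤ x0 i) (hεj : x0 j + ε ≤ xmax j) :
    c i (x0 i) + c j (x0 j) ≤ c i (x0 i - ε) + c j (x0 j + ε) := by
  classical
  set x := Function.update (Function.update x0 i (x0 i - ε)) j (x0 j + ε)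
  have hdiff (g : ι → ℝ → ℝ) : ∑ k ∈ S, (g k (x k) - g k (x0 k)) =
      (g i (x0 i - ε) - g i (x0 i)) + (g j (x0 j + ε) - g j (x0 j)) := by
    rw [Finset.sum_eq_add_of_mem i j hi hj hij fun k _ hk => by simp [x, hk.1, hk.2]]
    simp [x, hij]
  have hfeas : ∀ k ∈ S, x k ∈ Icc 0 (xmax k) := by
    intro k hk
    obtain ⟨h0, hM⟩ := hx0feas k hk
    simp only [x, Function.update_apply]
    split_ifs with hkj hki
    · subst hkj; exact ⟨by linarith, hεj⟩
    · subst hki; exact ⟨by linarith, by linarith⟩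
    · exact ⟨h0, hM⟩
  have hsum : ∑ k ∈ S, x k = d' := by
    have := hdiff fun _ t => t
    rw [Finset.sum_sub_distrib, hx0sum] at this
    linarith
  have := hx0min x hfeas hsum
  have := hdiff c
  rw [Finset.sum_sub_distrib] at this
  linarith

lemma le_of_hasDerivWithinAt_of_optimal (hconv : ∀ i ∈ S, ConvexOn ℝ (Icc 0 (xmax i)) (c i))
    (hx0feas : ∀ i ∈ S, x0 i ∈ Icc 0 (xmax i)) (hx0sum : ∑ i ∈ S, x0 i = d')
    (hx0min : ∀ x : ι → ℝ, (∀ i ∈ S, x i ∈ Icc 0 (xmax i)) →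
      ∑ i ∈ S, x i = d' → ∑ i ∈ S, c i (x0 i) ≤ ∑ i ∈ S, c i (x i))
    {i j : ι} (hi : i ∈ S) (hj : j ∈ S) (hxi : 0 < x0 i) (hxj : x0 j < xmax j) {a b : ℝ}
    (ha : HasDerivWithinAt (c i) a (Icc 0 (x0 i)) (x0 i))
    (hb : HasDerivWithinAt (c j) b (Icc (x0 j) (xmax j)) (x0 j)) : a ≤ b := by
  refine le_of_hasDerivWithinAt_of_eventually_add_le hxi hxj ha hb ?_
  filter_upwards [Ioo_mem_nhdsGT (lt_min hxi (sub_pos.2 hxj))] with ε ⟨hε, hεm⟩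
  have hεi : ε ≤ x0 i := (hεm.trans_le (min_le_left _ _)).le
  have hεj : x0 j + ε ≤ xmax j := by linarith [hεm.trans_le (min_le_right _ _)]
  rcases eq_or_ne i j with rfl | hij
  · have hmid := (hconv i hi).2 (x := x0 i - ε) (y := x0 i + ε) ⟨by linarith, by linarith⟩
      ⟨by linarith [(hx0feas i hi).1], hεj⟩ (by norm_num : (0 : ℝ) ≤ 1 / 2)
      (by norm_num : (0 : ℝ) ≤ 1 / 2) (by norm_num)
    rw [smul_eq_mul, smul_eq_mul, smul_eq_mul, smul_eq_mul,
      show 1 / 2 * (x0 i - ε) + 1 / 2 * (x0 i + ε) = x0 i by ring] at hmid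
    linarith
  · exact add_le_of_transfer hx0feas hx0sum hx0min hi hj hij hε.le hεi hεj

end Dispatch

theorem stmt_17_general (n : ℕ) (S : Finset (Fin n))
    (xmax : Fin n → ℝ) (c : Fin n → ℝ → ℝ)
    (hxmax : ∀ i ∈ S, 0 < xmax i)
    (hconv : ∀ i ∈ S, ConvexOn ℝ (Set.Icc 0 (xmax i)) (c i))
    (dp dm : Fin n → ℝ → ℝ)
    (hdp : ∀ i ∈ S, ∀ y ∈ Set.Ico (0 : ℝ) (xmax i),
      HasDerivWithinAt (c i) (dp i y) (Set.Icc y (xmax i)) y)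
    (hdm : ∀ i ∈ S, ∀ y ∈ Set.Ioc (0 : ℝ) (xmax i),
      HasDerivWithinAt (c i) (dm i y) (Set.Icc 0 y) y)
    (d' : ℝ)
    (x0 : Fin n → ℝ)
    (hx0feas : ∀ i ∈ S, x0 i ∈ Set.Icc 0 (xmax i)) (hx0sum : ∑ i ∈ S, x0 i = d')
    (hx0min : ∀ x : Fin n → ℝ, (∀ i ∈ S, x i ∈ Set.Icc 0 (xmax i)) →
      ∑ i ∈ S, x i = d' → ∑ i ∈ S, c i (x0 i) ≤ ∑ i ∈ S, c i (x i)) :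
    ∃ lam : ℝ,
      (∀ i ∈ S, x0 i = xmax i → dm i (xmax i) ≤ lam)
      ∧ (∀ i ∈ S, x0 i = 0 → lam ≤ dp i 0)
      ∧ (∀ i ∈ S, x0 i ∈ Set.Ioo 0 (xmax i) → dm i (x0 i) ≤ lam ∧ lam ≤ dp i (x0 i)) := by
  obtain ⟨lam, hdm_le, hle_dp⟩ := Finset.exists_between_of_forall_le
    {i ∈ S | 0 < x0 i} {j ∈ S | x0 j < xmax j} (fun i => dm i (x0 i)) (fun j => dp j (x0 j))
    fun i hi j hj => by
      rw [Finset.mem_filter] at hi hj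
      exact le_of_hasDerivWithinAt_of_optimal hconv hx0feas hx0sum hx0min hi.1 hj.1 hi.2 hj.2
        (hdm i hi.1 _ ⟨hi.2, (hx0feas i hi.1).2⟩) (hdp j hj.1 _ ⟨(hx0feas j hj.1).1, hj.2⟩)
  refine ⟨lam, fun i hi hmax => ?_, fun i hi hzero => ?_, fun i hi hint => ?_⟩
  · simpa [hmax] using hdm_le i (Finset.mem_filter.2 ⟨hi, hmax ▸ hxmax i hi⟩)
  · simpa [hzero] using hle_dp i (Finset.mem_filter.2 ⟨hi, hzero ▸ hxmax i hi⟩)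
  · exact ⟨hdm_le i (Finset.mem_filter.2 ⟨hi, hint.1⟩),
      hle_dp i (Finset.mem_filter.2 ⟨hi, hint.2⟩)⟩

/-- KKT conditions for the convex dispatch subproblem: if `x°` minimizes
`Σ_{i∈S} c_i(x_i)` over `{x : 0 ≤ x_i ≤ xmax_i (i ∈ S), Σ_{i∈S} x_i = d'}`, then there is
a multiplier `λ` with `∂₋c_i(xmax_i) ≤ λ` whenever `x_i° = xmax_i`, `λ ≤ ∂₊c_i(0)`
whenever `x_i° = 0`, and `∂₋c_i(x_i°) ≤ λ ≤ ∂₊c_i(x_i°)` whenever `0 < x_i° < xmax_i`. -/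
theorem stmt_17 (n : ℕ) (S : Finset (Fin n)) (hS : S.Nonempty)
    (xmax : Fin n → ℝ) (c : Fin n → ℝ → ℝ)
    (hxmax : ∀ i ∈ S, 0 < xmax i)
    (hconv : ∀ i ∈ S, ConvexOn ℝ (Set.Icc 0 (xmax i)) (c i))
    (hmono : ∀ i ∈ S, MonotoneOn (c i) (Set.Icc 0 (xmax i)))
    (hcont : ∀ i ∈ S, ContinuousOn (c i) (Set.Icc 0 (xmax i)))
    (hc0 : ∀ i ∈ S, c i 0 = 0)
    (dp dm : Fin n → ℝ → ℝ)
    (hdp : ∀ i ∈ S, ∀ y ∈ Set.Ico (0 : ℝ) (xmax i),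
      HasDerivWithinAt (c i) (dp i y) (Set.Icc y (xmax i)) y)
    (hdm : ∀ i ∈ S, ∀ y ∈ Set.Ioc (0 : ℝ) (xmax i),
      HasDerivWithinAt (c i) (dm i y) (Set.Icc 0 y) y)
    (d' : ℝ) (hd'0 : 0 ≤ d') (hd' : d' ≤ ∑ i ∈ S, xmax i)
    (x0 : Fin n → ℝ)
    (hx0feas : ∀ i ∈ S, x0 i ∈ Set.Icc 0 (xmax i)) (hx0sum : ∑ i ∈ S, x0 i = d')
    (hx0min : ∀ x : Fin n → ℝ, (∀ i ∈ S, x i ∈ Set.Icc 0 (xmax i)) →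
      ∑ i ∈ S, x i = d' → ∑ i ∈ S, c i (x0 i) ≤ ∑ i ∈ S, c i (x i)) :
    ∃ lam : ℝ,
      (∀ i ∈ S, x0 i = xmax i → dm i (xmax i) ≤ lam)
      ∧ (∀ i ∈ S, x0 i = 0 → lam ≤ dp i 0)
      ∧ (∀ i ∈ S, x0 i ∈ Set.Ioo 0 (xmax i) → dm i (x0 i) ≤ lam ∧ lam ≤ dp i (x0 i)) :=
  stmt_17_general n S xmax c hxmax hconv dp dm hdp hdm d' x0 hx0feas hx0sum hx0min
end
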